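/- arXiv:2304.10413 — 7 statements merged into one kernel-verified Lean document; each statement's English description precedes it below -/
import Mathlib

section
/- Let α > 1/2 and let r(h) = |h|^α for h ∈ Z \ {0}. For any prime p and 1/2 ≤ λ < α, the average over z ∈ {0,…,p−1} of (∑_{h ≠ 0, hz ≡ 0 mod p} r(h)^{-2})^{1/(2λ)} is at most (2/p) ∑_{h ≠ 0} |h|^{-α/λ}. -/
/-!
Raising to the power `q = 1/(2λ) ≤ 1` is subadditive, so each inner sum is bounded termwise by
`∑ |h|^(-α/λ)` over the same `h`. For `z = 0` every `h ≠ 0` occurs, giving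
`S = ∑_{h ≠ 0} |h|^(-α/λ)`. For `0 < z < p` primality forces `p ∣ h`, so writing `h = p k` the
sum is `p^(-α/λ) S ≤ S / p`. Summing over `z` gives at most `S + (p - 1) S / p ≤ 2 S`.
-/

open Filter Topology

namespace Real

theorem rpow_sum_le_sum_rpow {ι : Type*} (s : Finset ι) {f : ι → ℝ} (hf : ∀ i ∈ s, 0 ≤ f i)
    {q : ℝ} (hq0 : 0 < q) (hq1 : q ≤ 1) :
    (∑ i ∈ s, f i) ^ q ≤ ∑ i ∈ s, f i ^ q :=
  Finset.le_sum_of_subadditive_on_pred (· ^ q) (0 ≤ ·) (by simp [zero_rpow hq0.ne'])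
    (fun _ _ hx hy => rpow_add_le_add_rpow hx hy hq0.le hq1) (fun _ _ => add_nonneg) f hf

theorem rpow_tsum_le_tsum_rpow {ι : Type*} {f : ι → ℝ} (hf : ∀ i, 0 ≤ f i) {q : ℝ}
    (hq0 : 0 < q) (hq1 : q ≤ 1) (hfq : Summable fun i => f i ^ q) :
    (∑' i, f i) ^ q ≤ ∑' i, f i ^ q := by
  by_cases hfs : Summable f
  · have hlim : Tendsto (fun s : Finset ι => (∑ i ∈ s, f i) ^ q) atTop (𝓝 ((∑' i, f i) ^ q)) :=
      hfs.hasSum.rpow_const (Or.inr hq0.le)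
    exact le_of_tendsto' hlim fun s => (rpow_sum_le_sum_rpow s (fun i _ => hf i) hq0 hq1).trans
      (hfq.sum_le_tsum s fun i _ => rpow_nonneg (hf i) q)
  · rw [tsum_eq_zero_of_not_summable hfs, zero_rpow hq0.ne']
    exact tsum_nonneg fun i => rpow_nonneg (hf i) q

end Real

theorem rpow_tsum_abs_int_rpow_le (P : ℤ → Prop) {a q : ℝ} (hq0 : 0 < q) (hq1 : q ≤ 1)
    (haq : a * q < -1) :
    (∑' h : {h : ℤ // P h}, (|(h : ℤ)| : ℝ) ^ a) ^ q ≤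
      ∑' h : {h : ℤ // P h}, (|(h : ℤ)| : ℝ) ^ (a * q) := by
  have hpow (x : ℝ) (hx : 0 ≤ x) : (x ^ a) ^ q = x ^ (a * q) := (Real.rpow_mul hx a q).symm
  have hsum : Summable fun h : ℤ => (|(h : ℤ)| : ℝ) ^ (a * q) := by
    simpa using Real.summable_abs_int_rpow (b := -(a * q)) (by linarith)
  refine (Real.rpow_tsum_le_tsum_rpow (fun _ => by positivity) hq0 hq1 ?_).trans_eq
    (tsum_congr fun h => hpow _ (by positivity))
  exact (hsum.subtype _).congr fun h => (hpow _ (by positivity)).symm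

theorem tsum_abs_rpow_nonzero_multiples {n : ℤ} (hn : n ≠ 0) (β : ℝ) :
    ∑' h : {h : ℤ // h ≠ 0 ∧ n ∣ h}, (|(h : ℤ)| : ℝ) ^ β =
      (|n| : ℝ) ^ β * ∑' k : {k : ℤ // k ≠ 0}, (|(k : ℤ)| : ℝ) ^ β := by
  let e : {k : ℤ // k ≠ 0} ≃ {h : ℤ // h ≠ 0 ∧ n ∣ h} :=
    { toFun k := ⟨n * k, mul_ne_zero hn k.2, dvd_mul_right n k⟩
      invFun h := ⟨h / n, by
        obtain ⟨_, hh, c, rfl⟩ := h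
        simpa [hn] using right_ne_zero_of_mul hh⟩
      left_inv k := by ext; simp [hn]
      right_inv h := by ext; exact Int.mul_ediv_cancel' h.2.2 }
  rw [← e.tsum_eq, ← tsum_mul_left]
  refine tsum_congr fun k => ?_
  simp only [e, Equiv.coe_fn_mk, abs_mul, Int.cast_mul]
  exact Real.mul_rpow (by positivity) (by positivity)

theorem tsum_abs_rpow_dvd_mul_of_not_dvd {p : ℤ} (hp : Prime p) {z : ℤ} (hz : ¬p ∣ z) (β : ℝ) :
    ∑' h : {h : ℤ // h ≠ 0 ∧ p ∣ h * z}, (|(h : ℤ)| : ℝ) ^ β =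
      (|p| : ℝ) ^ β * ∑' k : {k : ℤ // k ≠ 0}, (|(k : ℤ)| : ℝ) ^ β := by
  have hdvd (h : ℤ) : p ∣ h * z ↔ p ∣ h :=
    ⟨fun hd => (hp.dvd_or_dvd hd).resolve_right hz, fun hd => dvd_mul_of_dvd_left hd z⟩
  rw [← tsum_abs_rpow_nonzero_multiples hp.ne_zero β]
  exact (Equiv.subtypeEquivRight fun h => and_congr_right fun _ => hdvd h).tsum_eq
    fun h : {h : ℤ // h ≠ 0 ∧ p ∣ h} => (|(h : ℤ)| : ℝ) ^ β

theorem tsum_abs_rpow_dvd_mul_le {p : ℕ} (hp : p.Prime) {z : ℕ} (hz : ¬p ∣ z) {β : ℝ}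
    (hβ : 1 ≤ β) :
    ∑' h : {h : ℤ // h ≠ 0 ∧ (p : ℤ) ∣ h * z}, (|(h : ℤ)| : ℝ) ^ (-β) ≤
      (∑' k : {k : ℤ // k ≠ 0}, (|(k : ℤ)| : ℝ) ^ (-β)) / p := by
  have hpβ : (p : ℝ) ^ (-β) ≤ (p : ℝ)⁻¹ :=
    (Real.rpow_le_rpow_of_exponent_le (by exact_mod_cast hp.one_le) (neg_le_neg hβ)).trans_eq
      (Real.rpow_neg_one _)
  rw [tsum_abs_rpow_dvd_mul_of_not_dvd (Nat.prime_iff_prime_int.1 hp)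
    (mt Int.natCast_dvd_natCast.1 hz), Int.cast_natCast, Nat.abs_cast, div_eq_inv_mul]
  exact mul_le_mul_of_nonneg_right hpβ (tsum_nonneg fun _ => by positivity)

theorem sum_range_le_two_mul {p : ℕ} (hp : 0 < p) {g : ℕ → ℝ} {S : ℝ} (hS : 0 ≤ S)
    (h0 : g 0 ≤ S) (hg : ∀ z, z ≠ 0 → z < p → g z ≤ S / p) :
    ∑ z ∈ Finset.range p, g z ≤ 2 * S := by
  calc ∑ z ∈ Finset.range p, g z = g 0 + ∑ z ∈ (Finset.range p).erase 0, g z :=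
        (Finset.add_sum_erase _ _ (Finset.mem_range.2 hp)).symm
    _ ≤ S + ∑ z ∈ Finset.range p, S / p := by
        gcongr 1
        calc ∑ z ∈ (Finset.range p).erase 0, g z ≤ ∑ z ∈ (Finset.range p).erase 0, S / p :=
              Finset.sum_le_sum fun z hz => by
                obtain ⟨hz0, hzp⟩ : z ≠ 0 ∧ z < p := by simpa using hz
                exact hg z hz0 hzp
          _ ≤ ∑ z ∈ Finset.range p, S / p :=
              Finset.sum_le_sum_of_subset_of_nonneg (Finset.erase_subset 0 _)
                fun _ _ _ => by positivity
    _ = 2 * S := by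
        rw [Finset.sum_const, Finset.card_range, nsmul_eq_mul, mul_div_cancel₀ _ (by positivity)]
        ring

theorem stmt6_general (p : ℕ) (hp : p.Prime) (α lam : ℝ)
    (hlam1 : 1 / 2 ≤ lam) (hlam2 : lam < α) :
    (1 / (p : ℝ)) * ∑ z ∈ Finset.range p,
        (∑' h : {h : ℤ // h ≠ 0 ∧ (p : ℤ) ∣ h * z}, (|(h : ℤ)| : ℝ) ^ (-2 * α)) ^
          (1 / (2 * lam)) ≤
      (2 / (p : ℝ)) * ∑' h : {h : ℤ // h ≠ 0}, (|(h : ℤ)| : ℝ) ^ (-(α / lam)) := by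
  have hlam : 0 < lam := by linarith
  have hβ : 1 < α / lam := (one_lt_div hlam).2 hlam2
  have hq1 : 1 / (2 * lam) ≤ 1 := by rw [div_le_one (by positivity)]; linarith
  have hexp : -2 * α * (1 / (2 * lam)) = -(α / lam) := by field_simp
  have hjensen (z : ℕ) :
      (∑' h : {h : ℤ // h ≠ 0 ∧ (p : ℤ) ∣ h * z}, (|(h : ℤ)| : ℝ) ^ (-2 * α)) ^ (1 / (2 * lam)) ≤
        ∑' h : {h : ℤ // h ≠ 0 ∧ (p : ℤ) ∣ h * z}, (|(h : ℤ)| : ℝ) ^ (-(α / lam)) :=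
    hexp ▸ rpow_tsum_abs_int_rpow_le _ (by positivity) hq1 (by rw [hexp]; linarith)
  have hzero : ∑' h : {h : ℤ // h ≠ 0 ∧ (p : ℤ) ∣ h * (0 : ℕ)}, (|(h : ℤ)| : ℝ) ^ (-(α / lam)) =
      ∑' h : {h : ℤ // h ≠ 0}, (|(h : ℤ)| : ℝ) ^ (-(α / lam)) :=
    (Equiv.subtypeEquivRight (p := fun h : ℤ => h ≠ 0 ∧ (p : ℤ) ∣ h * (0 : ℕ))
      fun h => by simp).tsum_eq fun h : {h : ℤ // h ≠ 0} => (|(h : ℤ)| : ℝ) ^ (-(α / lam))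
  have hsum := sum_range_le_two_mul hp.pos (tsum_nonneg fun _ => by positivity)
    ((hjensen 0).trans_eq hzero) fun z hz0 hzp => (hjensen z).trans
      (tsum_abs_rpow_dvd_mul_le hp (fun hd => hz0 (Nat.eq_zero_of_dvd_of_lt hd hzp)) hβ.le)
  exact (mul_le_mul_of_nonneg_left hsum (by positivity)).trans_eq (by ring)

theorem stmt6 (p : ℕ) (hp : p.Prime) (α lam : ℝ)
    (hα : 1 / 2 < α) (hlam1 : 1 / 2 ≤ lam) (hlam2 : lam < α) :
    (1 / (p : ℝ)) * ∑ z ∈ Finset.range p,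
        (∑' h : {h : ℤ // h ≠ 0 ∧ (p : ℤ) ∣ h * z}, (|(h : ℤ)| : ℝ) ^ (-2 * α)) ^
          (1 / (2 * lam)) ≤
      (2 / (p : ℝ)) * ∑' h : {h : ℤ // h ≠ 0}, (|(h : ℤ)| : ℝ) ^ (-(α / lam)) :=
  stmt6_general p hp α lam hlam1 hlam2
end

section
/- Let α > 1/2, d ≥ 1, and weights γ_u > 0 for subsets u of {1,…,d}. Define r(h) = γ_{supp(h)}^{-1} ∏_{j ∈ supp(h)} |h_j|^α for h ∈ Z^d, and μ(λ) = ∑_{h ≠ 0} r(h)^{-1/λ}. Then for any prime p and 1/2 ≤ λ < α, (1/p^d) ∑_{z ∈ (Z/pZ)^d} (∑_{h≠0, h·z ≡ 0 mod p} r(h)^{-2})^{1/(2λ)} ≤ (2/p) μ(λ). -/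
/-!
Put `w h = r(h)^(-1/λ)` for `h ≠ 0` and `w 0 = 0`, so that `μ(λ) = ∑ w`. Since `2λ ≥ 1`, the
`ℓ^(2λ)`-norm is bounded by the `ℓ¹`-norm, so the summand at `z` is at most `∑_{h·z ≡ 0} w h`.
Averaging over `z`: a vector `h` that is nonzero mod `p` satisfies `h·z ≡ 0` for exactly
`p^(d-1)` of the `p^d` points `z`, a vector in `pℤ^d` for all of them, so the average is at most
`(1/p) ∑ w + ∑_{h ∈ pℤ^d} w h`. Finally `r(p h) ≥ p^α r(h)` and `α/λ > 1` give `w (p h) ≤ w h / p`,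
so the second sum is at most `(1/p) μ(λ)` as well.
-/

open scoped BigOperators Classical

noncomputable def rK {d : ℕ} (α : ℝ) (γ : Finset (Fin d) → ℝ) (h : Fin d → ℤ) : ℝ :=
  (γ (Finset.univ.filter fun j => h j ≠ 0))⁻¹ *
    ∏ j ∈ Finset.univ.filter (fun j => h j ≠ 0), (|h j| : ℝ) ^ α

noncomputable def muK {d : ℕ} (α : ℝ) (γ : Finset (Fin d) → ℝ) (lam : ℝ) : ℝ :=
  ∑' h : {h : Fin d → ℤ // h ≠ 0}, rK α γ h.1 ^ (-(1 / lam))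

theorem tsum_subtype_eq_tsum_ite {β α : Type*} [AddCommMonoid α] [TopologicalSpace α]
    (P : β → Prop) [DecidablePred P] (f : β → α) :
    ∑' x : {x // P x}, f x = ∑' x, if P x then f x else 0 :=
  (tsum_subtype {x | P x} f).trans (tsum_congr fun _ => Set.indicator_apply _ _ _)

theorem tsum_rpow_rpow_inv_le_tsum {ι : Type*} {g : ι → ℝ} (hg : ∀ i, 0 ≤ g i) (hs : Summable g)
    {r : ℝ} (hr : 1 ≤ r) : (∑' i, g i ^ r) ^ r⁻¹ ≤ ∑' i, g i := by
  set M := ∑' i, g i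
  have hpow : ∀ x : ℝ, 0 ≤ x → x ^ r = x ^ (r - 1) * x := fun x hx => by
    rw [← Real.rpow_add_one' hx (by linarith), sub_add_cancel]
  have hle : ∀ i, g i ^ r ≤ M ^ (r - 1) * g i := fun i => by
    rw [hpow _ (hg i)]
    exact mul_le_mul_of_nonneg_right
      (Real.rpow_le_rpow (hg i) (hs.le_tsum i fun j _ => hg j) (by linarith)) (hg i)
  have hsum : Summable fun i => M ^ (r - 1) * g i := hs.mul_left _
  rw [Real.rpow_inv_le_iff_of_pos (tsum_nonneg fun i => Real.rpow_nonneg (hg i) r)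
    (tsum_nonneg hg) (by linarith)]
  calc ∑' i, g i ^ r ≤ ∑' i, M ^ (r - 1) * g i :=
        (hsum.of_nonneg_of_le (fun i => Real.rpow_nonneg (hg i) r) hle).tsum_le_tsum hle hsum
    _ = M ^ r := by rw [tsum_mul_left, hpow M (tsum_nonneg hg)]

theorem summable_prod_apply_of_nonneg {α : Type*} {f : α → ℝ} (hf : ∀ a, 0 ≤ f a)
    (hs : Summable f) :
    ∀ n : ℕ, Summable fun x : Fin n → α => ∏ j, f (x j)
  | 0 => Summable.of_finite
  | n + 1 => by
    rw [← (Fin.consEquiv fun _ => α).summable_iff]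
    refine (hs.mul_of_nonneg (summable_prod_apply_of_nonneg hf hs n) hf
      fun x => Finset.prod_nonneg fun j _ => hf _).congr fun x => ?_
    simp [Fin.prod_univ_succ]

theorem card_filter_sum_mul_eq_zero {F ι : Type*} [Field F] [Fintype F] [DecidableEq F]
    [Fintype ι] [DecidableEq ι] {h : ι → F} (hh : h ≠ 0) :
    (Finset.univ.filter fun z : ι → F => ∑ j, h j * z j = 0).card =
      Fintype.card F ^ (Fintype.card ι - 1) := by
  set φ := dotProductBilin F F h
  have hφ : Function.Surjective φ := by
    obtain ⟨j, hj⟩ := Function.ne_iff.mp hh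
    intro c
    refine ⟨Pi.single j (c / h j), ?_⟩
    simp [φ, mul_div_cancel₀ c hj]
  have hrank := LinearMap.finrank_range_add_finrank_ker φ
  rw [LinearMap.range_eq_top.mpr hφ, finrank_top, Module.finrank_self,
    Module.finrank_fintype_fun_eq_card] at hrank
  rw [← hrank, Nat.add_sub_cancel_left,
    ← Module.card_eq_pow_finrank (K := F) (V := LinearMap.ker φ), Fintype.card_subtype]
  congr 1
  ext z
  simp [φ, dotProduct]

theorem card_filter_sum_intCast_mul_eq_zero_div_le {ι : Type*} [Fintype ι] [DecidableEq ι]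
    (p : ℕ) [Fact p.Prime] (h : ι → ℤ) :
    ((Finset.univ.filter fun z : ι → ZMod p => ∑ j, (h j : ZMod p) * z j = 0).card : ℝ) /
        (p : ℝ) ^ Fintype.card ι ≤ 1 / p + if ∀ j, (p : ℤ) ∣ h j then 1 else 0 := by
  have hp : (0 : ℝ) < p := Nat.cast_pos.mpr (Fact.out : p.Prime).pos
  split_ifs with hdvd
  · calc _ ≤ (1 : ℝ) := by
          rw [div_le_one (by positivity)]
          exact_mod_cast (Finset.card_le_univ _).trans (by simp)
      _ ≤ 1 / p + 1 := by simp [hp.le]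
  · push Not at hdvd
    obtain ⟨j, hj⟩ := hdvd
    have hne : (fun j => (h j : ZMod p)) ≠ 0 :=
      Function.ne_iff.mpr ⟨j, by rwa [Pi.zero_apply, Ne, ZMod.intCast_zmod_eq_zero_iff_dvd]⟩
    have hn : Fintype.card ι = Fintype.card ι - 1 + 1 :=
      (Nat.sub_add_cancel (Fintype.card_pos_iff.mpr ⟨j⟩)).symm
    rw [card_filter_sum_mul_eq_zero hne, ZMod.card, add_zero, hn, Nat.add_sub_cancel]
    push_cast
    rw [pow_succ, div_mul_cancel_left₀ (by positivity), one_div]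

theorem average_tsum_sum_intCast_mul_eq_zero_le {ι : Type*} [Fintype ι] [DecidableEq ι]
    (p : ℕ) [Fact p.Prime] {w : (ι → ℤ) → ℝ} (hw : ∀ h, 0 ≤ w h) (hs : Summable w) :
    (1 / (p : ℝ) ^ Fintype.card ι) * ∑ z : ι → ZMod p,
        ∑' h : {h : ι → ℤ // ∑ j, (h j : ZMod p) * z j = 0}, w h ≤
      (1 / p) * ∑' h, w h + ∑' h : {h : ι → ℤ // ∀ j, (p : ℤ) ∣ h j}, w h := by
  have hsum (P : (ι → ℤ) → Prop) [DecidablePred P] : Summable fun h => if P h then w h else 0 :=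
    hs.of_nonneg_of_le (fun h => by split_ifs; exacts [hw h, le_rfl])
      fun h => by split_ifs; exacts [le_rfl, hw h]
  have hpoint : ∀ h, (1 / (p : ℝ) ^ Fintype.card ι) *
      ∑ z : ι → ZMod p, (if ∑ j, (h j : ZMod p) * z j = 0 then w h else 0) ≤
      (1 / p) * w h + if ∀ j, (p : ℤ) ∣ h j then w h else 0 := fun h => by
    rw [← Finset.sum_filter, Finset.sum_const, nsmul_eq_mul]
    calc _ = ((Finset.univ.filter fun z : ι → ZMod p => ∑ j, (h j : ZMod p) * z j = 0).card : ℝ) /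
          (p : ℝ) ^ Fintype.card ι * w h := by ring
      _ ≤ (1 / p + if ∀ j, (p : ℤ) ∣ h j then 1 else 0) * w h :=
          mul_le_mul_of_nonneg_right (card_filter_sum_intCast_mul_eq_zero_div_le p h) (hw h)
      _ = _ := by split_ifs <;> ring
  have hsumL : Summable fun h => (1 / (p : ℝ) ^ Fintype.card ι) *
      ∑ z : ι → ZMod p, (if ∑ j, (h j : ZMod p) * z j = 0 then w h else 0) :=
    (summable_sum fun z _ => hsum _).mul_left _
  have hsumR : Summable fun h => (1 / p) * w h + if ∀ j, (p : ℤ) ∣ h j then w h else 0 :=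
    (hs.mul_left _).add (hsum _)
  simp_rw [tsum_subtype_eq_tsum_ite]
  rw [← Summable.tsum_finsetSum fun z _ => hsum _, ← tsum_mul_left, ← tsum_mul_left,
    ← (hs.mul_left _).tsum_add (hsum _)]
  exact Summable.tsum_le_tsum hpoint hsumL hsumR

theorem tsum_subtype_forall_dvd_le {ι : Type*} {w : (ι → ℤ) → ℝ} (hs : Summable w) {n : ℤ}
    (hn : n ≠ 0) {c : ℝ} (hc : ∀ h, w (n • h) ≤ c * w h) :
    ∑' h : {h : ι → ℤ // ∀ j, n ∣ h j}, w h ≤ c * ∑' h, w h := by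
  have hinj : Function.Injective (n • · : (ι → ℤ) → ι → ℤ) := smul_right_injective _ hn
  have hrange : Set.range (n • · : (ι → ℤ) → ι → ℤ) = {h | ∀ j, n ∣ h j} := by
    ext h
    refine ⟨?_, fun hdvd => ⟨fun j => h j / n, funext fun j => Int.mul_ediv_cancel' (hdvd j)⟩⟩
    rintro ⟨h, rfl⟩ j
    exact ⟨h j, rfl⟩
  calc ∑' h : {h : ι → ℤ // ∀ j, n ∣ h j}, w h = ∑' h, w (n • h) := by
        rw [← tsum_range w hinj, hrange]
        rfl
    _ ≤ ∑' h, c * w h := (hs.comp_injective hinj).tsum_le_tsum hc (hs.mul_left c)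
    _ = c * ∑' h, w h := tsum_mul_left

section rK

variable {d : ℕ} {α : ℝ} {γ : Finset (Fin d) → ℝ}

theorem rK_pos (hγ : ∀ u, 0 < γ u) (h : Fin d → ℤ) : 0 < rK α γ h :=
  mul_pos (inv_pos.mpr (hγ _)) <| Finset.prod_pos fun _ hj =>
    Real.rpow_pos_of_pos (abs_pos.mpr (Int.cast_ne_zero.mpr (Finset.mem_filter.mp hj).2)) _

theorem rK_rpow_neg (hγ : ∀ u, 0 < γ u) (t : ℝ) (h : Fin d → ℤ) :
    rK α γ h ^ (-t) = γ (Finset.univ.filter fun j => h j ≠ 0) ^ t *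
      ∏ j, if h j ≠ 0 then (|h j| : ℝ) ^ (-(α * t)) else 1 := by
  have hprod : 0 ≤ ∏ j ∈ Finset.univ.filter (fun j => h j ≠ 0), (|h j| : ℝ) ^ α :=
    Finset.prod_nonneg fun j _ => Real.rpow_nonneg (abs_nonneg _) α
  rw [rK, Real.mul_rpow (inv_nonneg.mpr (hγ _).le) hprod, Real.inv_rpow (hγ _).le,
    Real.rpow_neg (hγ _).le, inv_inv, ← Finset.prod_filter,
    ← Real.finsetProd_rpow _ _ fun j _ => Real.rpow_nonneg (abs_nonneg _) α]
  congr 1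
  refine Finset.prod_congr rfl fun j _ => ?_
  rw [← Real.rpow_mul (abs_nonneg _), mul_neg]

theorem summable_rK_rpow_neg (hγ : ∀ u, 0 < γ u) {t : ℝ} (ht : 1 < α * t) :
    Summable fun h : Fin d → ℤ => rK α γ h ^ (-t) := by
  set f : ℤ → ℝ := fun n => if n ≠ 0 then (|n| : ℝ) ^ (-(α * t)) else 1
  have hf0 : ∀ n, 0 ≤ f n := fun n => by
    dsimp only [f]; split_ifs <;> positivity
  have hf : Summable f := by
    refine ((Real.summable_abs_int_rpow ht).update 0 1).congr fun n => ?_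
    by_cases hn : n = 0 <;> simp [f, hn]
  set C := ∑ u, γ u ^ t
  have hbound : ∀ h, rK α γ h ^ (-t) ≤ C * ∏ j, f (h j) := fun h => by
    rw [rK_rpow_neg hγ]
    exact mul_le_mul_of_nonneg_right
      (Finset.single_le_sum (fun u _ => Real.rpow_nonneg (hγ u).le t) (Finset.mem_univ _))
      (Finset.prod_nonneg fun j _ => hf0 _)
  exact ((summable_prod_apply_of_nonneg hf0 hf d).mul_left C).of_nonneg_of_le
    (fun h => Real.rpow_nonneg (rK_pos hγ h).le _) hbound

theorem rpow_mul_rK_le_rK_smul (hγ : ∀ u, 0 < γ u) (hα : 0 ≤ α) {n : ℕ} (hn : n ≠ 0)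
    {h : Fin d → ℤ} (hh : h ≠ 0) : (n : ℝ) ^ α * rK α γ h ≤ rK α γ ((n : ℤ) • h) := by
  have hsupp : (Finset.univ.filter fun j => ((n : ℤ) • h) j ≠ 0) =
      Finset.univ.filter fun j => h j ≠ 0 := by
    simp [hn]
  have hcard : (Finset.univ.filter fun j => h j ≠ 0).card ≠ 0 := by
    simpa [Finset.card_eq_zero, Finset.filter_eq_empty_iff, funext_iff] using hh
  have hn1 : (1 : ℝ) ≤ (n : ℝ) ^ α :=
    Real.one_le_rpow (Nat.one_le_cast.mpr (Nat.one_le_iff_ne_zero.mpr hn)) hα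
  have hsmul : ∀ j, (|((n : ℤ) • h) j| : ℝ) ^ α = (n : ℝ) ^ α * (|h j| : ℝ) ^ α := fun j => by
    simp [abs_mul, Real.mul_rpow]
  calc (n : ℝ) ^ α * rK α γ h
      ≤ ((n : ℝ) ^ α) ^ (Finset.univ.filter fun j => h j ≠ 0).card * rK α γ h :=
        mul_le_mul_of_nonneg_right (le_self_pow₀ hn1 hcard) (rK_pos hγ h).le
    _ = rK α γ ((n : ℤ) • h) := by
        rw [rK, rK, hsupp, Finset.prod_congr rfl fun j _ => hsmul j, Finset.prod_mul_distrib,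
          Finset.prod_const, mul_left_comm]

end rK

noncomputable def muKTerm {d : ℕ} (α : ℝ) (γ : Finset (Fin d) → ℝ) (lam : ℝ) :
    (Fin d → ℤ) → ℝ :=
  ({0}ᶜ : Set (Fin d → ℤ)).indicator fun h => rK α γ h ^ (-(1 / lam))

section muKTerm

variable {d : ℕ} {α : ℝ} {γ : Finset (Fin d) → ℝ} {lam : ℝ}

theorem muK_eq_tsum_muKTerm : muK α γ lam = ∑' h, muKTerm α γ lam h :=
  tsum_subtype ({0}ᶜ : Set (Fin d → ℤ)) fun h => rK α γ h ^ (-(1 / lam))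

theorem muKTerm_nonneg (hγ : ∀ u, 0 < γ u) (h : Fin d → ℤ) : 0 ≤ muKTerm α γ lam h :=
  Set.indicator_nonneg (fun h _ => Real.rpow_nonneg (rK_pos hγ h).le _) h

theorem summable_muKTerm (hγ : ∀ u, 0 < γ u) (hlam : 0 < lam) (hlamα : lam < α) :
    Summable (muKTerm α γ lam) :=
  (summable_rK_rpow_neg hγ (by rwa [mul_one_div, one_lt_div hlam])).indicator _

theorem muKTerm_smul_le (hγ : ∀ u, 0 < γ u) (hlam : 0 < lam) (hlamα : lam < α) {n : ℕ}
    (hn : n ≠ 0) (h : Fin d → ℤ) :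
    muKTerm α γ lam ((n : ℤ) • h) ≤ (n : ℝ)⁻¹ * muKTerm α γ lam h := by
  by_cases hh : h = 0
  · simp [hh, muKTerm]
  have hnh : (n : ℤ) • h ≠ 0 := smul_ne_zero (by exact_mod_cast hn) hh
  have hn0 : (0 : ℝ) < n := by exact_mod_cast Nat.pos_of_ne_zero hn
  have hexp : (n : ℝ) ^ (-(α / lam)) ≤ (n : ℝ)⁻¹ := by
    rw [← Real.rpow_neg_one]
    exact Real.rpow_le_rpow_of_exponent_le (Nat.one_le_cast.mpr (Nat.one_le_iff_ne_zero.mpr hn))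
      (by rw [neg_le_neg_iff, le_div_iff₀ hlam]; linarith)
  simp only [muKTerm, Set.indicator_of_mem (Set.mem_compl_singleton_iff.mpr hh),
    Set.indicator_of_mem (Set.mem_compl_singleton_iff.mpr hnh)]
  calc rK α γ ((n : ℤ) • h) ^ (-(1 / lam))
      ≤ ((n : ℝ) ^ α * rK α γ h) ^ (-(1 / lam)) :=
        Real.rpow_le_rpow_of_nonpos (mul_pos (Real.rpow_pos_of_pos hn0 α) (rK_pos hγ h))
          (rpow_mul_rK_le_rK_smul hγ (by linarith) hn hh) (by simp [hlam.le])
    _ = (n : ℝ) ^ (-(α / lam)) * rK α γ h ^ (-(1 / lam)) := by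
        rw [Real.mul_rpow (Real.rpow_nonneg hn0.le α) (rK_pos hγ h).le, ← Real.rpow_mul hn0.le]
        ring_nf
    _ ≤ (n : ℝ)⁻¹ * rK α γ h ^ (-(1 / lam)) :=
        mul_le_mul_of_nonneg_right hexp (Real.rpow_nonneg (rK_pos hγ h).le _)

theorem rpow_tsum_rK_rpow_neg_two_le (hγ : ∀ u, 0 < γ u) (hlam : 1 / 2 ≤ lam) (hlamα : lam < α)
    (P : (Fin d → ℤ) → Prop) [DecidablePred P] :
    (∑' h : {h : Fin d → ℤ // h ≠ 0 ∧ P h}, rK α γ h.1 ^ (-2 : ℝ)) ^ (1 / (2 * lam)) ≤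
      ∑' h : {h : Fin d → ℤ // P h}, muKTerm α γ lam h := by
  have hlam0 : 0 < lam := by linarith
  have hpow : ∀ h, (if h ≠ 0 ∧ P h then rK α γ h ^ (-2 : ℝ) else 0) =
      if P h then muKTerm α γ lam h ^ (2 * lam) else 0 := fun h => by
    by_cases hh : h = 0
    · simp [hh, muKTerm, hlam0.ne']
    · simp only [hh, muKTerm, ne_eq, not_false_eq_true, true_and,
        Set.indicator_of_mem (Set.mem_compl_singleton_iff.mpr hh)]
      rw [← Real.rpow_mul (rK_pos hγ h).le, neg_mul, one_div_mul_eq_div,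
        mul_div_cancel_right₀ _ hlam0.ne']
  have htsum : ∑' h : {h : Fin d → ℤ // h ≠ 0 ∧ P h}, rK α γ h.1 ^ (-2 : ℝ) =
      ∑' h : {h : Fin d → ℤ // P h}, muKTerm α γ lam h ^ (2 * lam) := by
    rw [tsum_subtype_eq_tsum_ite (fun h => h ≠ 0 ∧ P h) fun h => rK α γ h ^ (-2 : ℝ),
      tsum_subtype_eq_tsum_ite P fun h => muKTerm α γ lam h ^ (2 * lam)]
    exact tsum_congr hpow
  rw [htsum, one_div (2 * lam)]
  exact tsum_rpow_rpow_inv_le_tsum (g := fun h : {h // P h} => muKTerm α γ lam h)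
    (fun h => muKTerm_nonneg hγ h.1) ((summable_muKTerm hγ hlam0 hlamα).subtype _) (by linarith)

end muKTerm

theorem stmt7_general (d : ℕ) (α : ℝ)
    (γ : Finset (Fin d) → ℝ) (hγ : ∀ u, 0 < γ u)
    (p : ℕ) [Fact p.Prime] (lam : ℝ) (hlam1 : 1 / 2 ≤ lam) (hlam2 : lam < α) :
    (1 / (p : ℝ) ^ d) * ∑ z : Fin d → ZMod p,
        (∑' h : {h : Fin d → ℤ // h ≠ 0 ∧ ∑ j, ((h j : ZMod p) * z j) = 0},
            rK α γ h.1 ^ (-2 : ℝ)) ^ (1 / (2 * lam)) ≤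
      (2 / (p : ℝ)) * muK α γ lam := by
  have hlam : 0 < lam := by linarith
  have hp : p ≠ 0 := (Fact.out : p.Prime).ne_zero
  have hsum := summable_muKTerm hγ hlam hlam2
  have havg := average_tsum_sum_intCast_mul_eq_zero_le p (muKTerm_nonneg hγ) hsum
  rw [Fintype.card_fin] at havg
  calc _ ≤ (1 / (p : ℝ) ^ d) * ∑ z : Fin d → ZMod p,
        ∑' h : {h : Fin d → ℤ // ∑ j, (h j : ZMod p) * z j = 0}, muKTerm α γ lam h := by
        gcongr with z
        exact rpow_tsum_rK_rpow_neg_two_le hγ hlam1 hlam2 fun h => ∑ j, (h j : ZMod p) * z j = 0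
    _ ≤ (1 / p) * ∑' h, muKTerm α γ lam h +
        ∑' h : {h : Fin d → ℤ // ∀ j, (p : ℤ) ∣ h j}, muKTerm α γ lam h := havg
    _ ≤ (1 / p) * ∑' h, muKTerm α γ lam h + (p : ℝ)⁻¹ * ∑' h, muKTerm α γ lam h := by
        gcongr
        exact tsum_subtype_forall_dvd_le hsum (by exact_mod_cast hp)
          (muKTerm_smul_le hγ hlam hlam2 hp)
    _ = (2 / p) * muK α γ lam := by rw [muK_eq_tsum_muKTerm]; ring

theorem stmt7 (d : ℕ) (hd : 1 ≤ d) (α : ℝ) (hα : 1 / 2 < α)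
    (γ : Finset (Fin d) → ℝ) (hγ : ∀ u, 0 < γ u)
    (p : ℕ) [Fact p.Prime] (lam : ℝ) (hlam1 : 1 / 2 ≤ lam) (hlam2 : lam < α) :
    (1 / (p : ℝ) ^ d) * ∑ z : Fin d → ZMod p,
        (∑' h : {h : Fin d → ℤ // h ≠ 0 ∧ ∑ j, ((h j : ZMod p) * z j) = 0},
            rK α γ h.1 ^ (-2 : ℝ)) ^ (1 / (2 * lam)) ≤
      (2 / (p : ℝ)) * muK α γ lam :=
  stmt7_general d α γ hγ p lam hlam1 hlam2
end

section
/- Let α > 1/2, λ ∈ (1/2, α), δ ∈ (0, λ − 1/2], B > 0, and r : Z^d \ {0} → ℝ>0 with μ := ∑_{h≠0} r(h)^{-1/λ} < ∞. Suppose ω : Z^d \ {0} → ℝ≥0 satisfies ω(h) ≤ C r(h)^{δ/λ}/n for all h, and ω(h) = 0 whenever r(h) ≤ B. Then (∑_{h≠0} ω(h)^2 r(h)^{-2})^{1/2} ≤ (C/n) B^{(1+2δ)/(2λ) − 1} μ^{1/2}. -/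
/- Where `r h > B` the bound on `ω` gives
`ω(h)² r(h)⁻² ≤ (C/n)² r(h)^{(1+2δ)/λ - 2} r(h)^{-1/λ} ≤ (C/n)² B^{(1+2δ)/λ - 2} r(h)^{-1/λ}`,
the exponent `(1+2δ)/λ - 2` being nonpositive since `δ ≤ λ - 1/2`; where `r h ≤ B` the term
vanishes. Summing and taking square roots gives the claim. -/

lemma Real.rpow_sq_mul_rpow_neg_two_le {x B lam δ : ℝ} (hB : 0 < B) (hBx : B ≤ x)
    (hlam : 0 < lam) (hδ : 1 + 2 * δ ≤ 2 * lam) :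
    (x ^ (δ / lam)) ^ 2 * x ^ (-2 : ℝ) ≤
      (B ^ ((1 + 2 * δ) / (2 * lam) - 1)) ^ 2 * x ^ (-(1 / lam)) := by
  have hx : 0 < x := hB.trans_le hBx
  have hexp : ((1 + 2 * δ) / (2 * lam) - 1) * 2 ≤ 0 := by
    have : (1 + 2 * δ) / (2 * lam) ≤ 1 := div_le_one_of_le₀ hδ (by positivity)
    linarith
  calc (x ^ (δ / lam)) ^ 2 * x ^ (-2 : ℝ)
      = x ^ (((1 + 2 * δ) / (2 * lam) - 1) * 2) * x ^ (-(1 / lam)) := by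
        rw [← Real.rpow_natCast, ← Real.rpow_mul hx.le, ← Real.rpow_add hx,
          ← Real.rpow_add hx]
        congr 1
        field_simp
        ring
    _ ≤ B ^ (((1 + 2 * δ) / (2 * lam) - 1) * 2) * x ^ (-(1 / lam)) := by
        gcongr ?_ * _
        exact Real.rpow_le_rpow_of_nonpos hB hBx hexp
    _ = (B ^ ((1 + 2 * δ) / (2 * lam) - 1)) ^ 2 * x ^ (-(1 / lam)) := by
        rw [Real.rpow_mul hB.le, Real.rpow_ofNat]

lemma sq_mul_rpow_neg_two_le_of_le_mul_rpow {w x B K lam δ : ℝ} (hB : 0 < B) (hBx : B ≤ x)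
    (hlam : 0 < lam) (hδ : 1 + 2 * δ ≤ 2 * lam) (hw0 : 0 ≤ w) (hw : w ≤ K * x ^ (δ / lam)) :
    w ^ 2 * x ^ (-2 : ℝ) ≤ (K * B ^ ((1 + 2 * δ) / (2 * lam) - 1)) ^ 2 * x ^ (-(1 / lam)) := by
  have hx : 0 < x := hB.trans_le hBx
  calc w ^ 2 * x ^ (-2 : ℝ) ≤ (K * x ^ (δ / lam)) ^ 2 * x ^ (-2 : ℝ) := by gcongr
    _ = K ^ 2 * ((x ^ (δ / lam)) ^ 2 * x ^ (-2 : ℝ)) := by ring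
    _ ≤ K ^ 2 * ((B ^ ((1 + 2 * δ) / (2 * lam) - 1)) ^ 2 * x ^ (-(1 / lam))) :=
        mul_le_mul_of_nonneg_left (Real.rpow_sq_mul_rpow_neg_two_le hB hBx hlam hδ) (sq_nonneg K)
    _ = (K * B ^ ((1 + 2 * δ) / (2 * lam) - 1)) ^ 2 * x ^ (-(1 / lam)) := by ring

lemma tsum_rpow_half_le_mul_tsum_rpow_half {ι : Type*} {f g : ι → ℝ} {A : ℝ} (hA : 0 ≤ A)
    (hf : ∀ i, 0 ≤ f i) (hfg : ∀ i, f i ≤ A ^ 2 * g i) (hg : Summable g) :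
    (∑' i, f i) ^ ((1 : ℝ) / 2) ≤ A * (∑' i, g i) ^ ((1 : ℝ) / 2) := by
  have hsum : ∑' i, f i ≤ A ^ 2 * ∑' i, g i := by
    rw [← tsum_mul_left]
    exact (hg.mul_left _).of_nonneg_of_le hf hfg |>.tsum_le_tsum hfg (hg.mul_left _)
  rw [← Real.sqrt_eq_rpow, ← Real.sqrt_eq_rpow, ← Real.sqrt_sq hA,
    ← Real.sqrt_mul (sq_nonneg A)]
  exact Real.sqrt_le_sqrt hsum

theorem stmt14_general (d : ℕ) (lam δ B C n : ℝ)
    (hlam1 : 1 / 2 < lam)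
    (hδ : δ ≤ lam - 1 / 2) (hB : 0 < B) (hC : 0 ≤ C) (hn : 0 < n)
    (r : {h : Fin d → ℤ // h ≠ 0} → ℝ) (hr : ∀ h, 0 < r h)
    (hμ : Summable (fun h => r h ^ (-(1 / lam))))
    (ω : {h : Fin d → ℤ // h ≠ 0} → ℝ) (hω0 : ∀ h, 0 ≤ ω h)
    (hωC : ∀ h, ω h ≤ C * r h ^ (δ / lam) / n)
    (hωB : ∀ h, r h ≤ B → ω h = 0) :
    (∑' h, ω h ^ 2 * r h ^ (-2 : ℝ)) ^ ((1 : ℝ) / 2) ≤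
      (C / n) * B ^ ((1 + 2 * δ) / (2 * lam) - 1) *
        (∑' h, r h ^ (-(1 / lam))) ^ ((1 : ℝ) / 2) := by
  have hlam : 0 < lam := by linarith
  refine tsum_rpow_half_le_mul_tsum_rpow_half (by positivity)
    (fun h => by have := hr h; positivity) (fun h => ?_) hμ
  rcases le_or_gt (r h) B with hrB | hBr
  · rw [hωB h hrB, zero_pow two_ne_zero, zero_mul]
    have := hr h
    positivity
  · refine sq_mul_rpow_neg_two_le_of_le_mul_rpow hB hBr.le hlam (by linarith) (hω0 h) ?_
    simpa only [mul_div_right_comm] using hωC h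

theorem stmt14 (d : ℕ) (hd : 1 ≤ d) (α lam δ B C n : ℝ)
    (hα : 1 / 2 < α) (hlam1 : 1 / 2 < lam) (hlam2 : lam < α)
    (hδ0 : 0 < δ) (hδ : δ ≤ lam - 1 / 2) (hB : 0 < B) (hC : 0 ≤ C) (hn : 0 < n)
    (r : {h : Fin d → ℤ // h ≠ 0} → ℝ) (hr : ∀ h, 0 < r h)
    (hμ : Summable (fun h => r h ^ (-(1 / lam))))
    (ω : {h : Fin d → ℤ // h ≠ 0} → ℝ) (hω0 : ∀ h, 0 ≤ ω h)
    (hωC : ∀ h, ω h ≤ C * r h ^ (δ / lam) / n)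
    (hωB : ∀ h, r h ≤ B → ω h = 0) :
    (∑' h, ω h ^ 2 * r h ^ (-2 : ℝ)) ^ ((1 : ℝ) / 2) ≤
      (C / n) * B ^ ((1 + 2 * δ) / (2 * lam) - 1) *
        (∑' h, r h ^ (-(1 / lam))) ^ ((1 : ℝ) / 2) :=
  stmt14_general d lam δ B C n hlam1 hδ hB hC hn r hr hμ ω hω0 hωC hωB
end

section
/- Let α > 1/2 and r(h) = |h|^{2α} for h ∈ Z \ {0} (i.e., one dimension with γ = 1). Let P_n be the set of primes in (n/2, n], n ≥ 2, with |P_n| > c'n/ln n. Then (1/|P_n|^2) ∑_{p,q ∈ P_n} ∑_{h ≠ 0, p | h, q | h} |h|^{−2α} ≤ (2^{2α} ln n)/(c' n^{2α+1}) · 2ζ(2α) + 2^{4α}/n^{4α} · 2ζ(2α). -/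
/-!
Substituting `h = m h'` shows that the sum of `|h|^(-2α)` over the nonzero multiples of `m` is
`m^(-2α) ∑_{h ≠ 0} |h|^(-2α)`, and `p ∣ h ∧ q ∣ h` means `lcm p q ∣ h`. For primes in `(n/2, n]` the
lcm is `p > n/2` on the diagonal and `p q > (n/2)^2` off it; the diagonal has only `|P_n|` of the
`|P_n|^2` terms, which produces the factor `1/|P_n| < ln n / (c' n)`.
-/

open scoped BigOperators Classical

/-- The set of primes `p` with `n/2 < p ≤ n`. -/
def Pn (n : ℕ) : Finset ℕ :=
  (Finset.range (n + 1)).filter (fun p => p.Prime ∧ n < 2 * p)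

open Finset

theorem Finset.sum_sum_le_of_diag_le_of_offDiag_le {ι R : Type*} [CommSemiring R] [PartialOrder R]
    [IsOrderedRing R] (s : Finset ι) (t : ι → ι → R) {A B : R}
    (hdiag : ∀ p ∈ s, t p p ≤ A) (hoff : ∀ p ∈ s, ∀ q ∈ s, p ≠ q → t p q ≤ B) (hB : 0 ≤ B) :
    ∑ p ∈ s, ∑ q ∈ s, t p q ≤ #s * A + #s ^ 2 * B := by
  have hrow : ∀ p ∈ s, ∑ q ∈ s, t p q ≤ A + #s * B := fun p hp => calc
    ∑ q ∈ s, t p q = t p p + ∑ q ∈ s.erase p, t p q := (add_sum_erase s _ hp).symm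
    _ ≤ A + ∑ q ∈ s.erase p, B :=
        add_le_add (hdiag p hp) (sum_le_sum fun q hq =>
          hoff p hp q (mem_of_mem_erase hq) (ne_of_mem_erase hq).symm)
    _ ≤ A + #s * B := by
        rw [sum_const, nsmul_eq_mul]
        gcongr
        exact erase_subset p s
  calc ∑ p ∈ s, ∑ q ∈ s, t p q ≤ ∑ p ∈ s, (A + #s * B) := sum_le_sum hrow
    _ = #s * A + #s ^ 2 * B := by rw [sum_const, nsmul_eq_mul]; ring

theorem Finset.one_div_card_sq_mul_sum_sum_le {ι R : Type*} [Field R] [LinearOrder R]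
    [IsStrictOrderedRing R] (s : Finset ι) (t : ι → ι → R) {A B : R}
    (hdiag : ∀ p ∈ s, t p p ≤ A) (hoff : ∀ p ∈ s, ∀ q ∈ s, p ≠ q → t p q ≤ B) (hB : 0 ≤ B) :
    1 / (#s : R) ^ 2 * ∑ p ∈ s, ∑ q ∈ s, t p q ≤ A / #s + B := by
  rcases s.eq_empty_or_nonempty with rfl | hs
  · simpa using hB
  have hcard : (0 : R) < #s := by exact_mod_cast hs.card_pos
  calc 1 / (#s : R) ^ 2 * ∑ p ∈ s, ∑ q ∈ s, t p q
      ≤ 1 / (#s : R) ^ 2 * (#s * A + #s ^ 2 * B) := by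
        gcongr
        exact s.sum_sum_le_of_diag_le_of_offDiag_le t hdiag hoff hB
    _ = A / #s + B := by field_simp

theorem tsum_abs_rpow_dvd (m : ℤ) (hm : m ≠ 0) (s : ℝ) :
    ∑' h : {h : ℤ // h ≠ 0 ∧ m ∣ h}, |(h : ℝ)| ^ s =
      |(m : ℝ)| ^ s * ∑' h : {h : ℤ // h ≠ 0}, |(h : ℝ)| ^ s := by
  let e : {h : ℤ // h ≠ 0} ≃ {h : ℤ // h ≠ 0 ∧ m ∣ h} := Equiv.ofBijective
    (fun k => ⟨m * k, mul_ne_zero hm k.2, dvd_mul_right m k⟩)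
    ⟨fun k l hkl => Subtype.ext (mul_left_cancel₀ hm (congrArg Subtype.val hkl)),
     fun ⟨_, hh, k, hk⟩ => ⟨⟨k, right_ne_zero_of_mul (hk ▸ hh)⟩, Subtype.ext hk.symm⟩⟩
  rw [← e.tsum_eq, ← tsum_mul_left]
  refine tsum_congr fun k => ?_
  change |((m * k : ℤ) : ℝ)| ^ s = _
  rw [Int.cast_mul, abs_mul, Real.mul_rpow (abs_nonneg _) (abs_nonneg _)]

theorem tsum_abs_rpow_dvd_and_dvd {p q : ℕ} (hp : p ≠ 0) (hq : q ≠ 0) (s : ℝ) :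
    ∑' h : {h : ℤ // h ≠ 0 ∧ (p : ℤ) ∣ h ∧ (q : ℤ) ∣ h}, |(h : ℝ)| ^ s =
      (p.lcm q : ℝ) ^ s * ∑' h : {h : ℤ // h ≠ 0}, |(h : ℝ)| ^ s := by
  have hdvd (h : ℤ) : (h ≠ 0 ∧ (p : ℤ) ∣ h ∧ (q : ℤ) ∣ h) ↔ (h ≠ 0 ∧ ((p.lcm q : ℕ) : ℤ) ∣ h) := by
    simp only [Int.natCast_dvd, Nat.lcm_dvd_iff]
  have hlcm := tsum_abs_rpow_dvd (p.lcm q) (by exact_mod_cast Nat.lcm_ne_zero hp hq) s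
  rw [Int.cast_natCast, Nat.abs_cast] at hlcm
  rw [← hlcm]
  exact (Equiv.subtypeEquivRight hdvd).tsum_eq fun h => |((h : ℤ) : ℝ)| ^ s

theorem prime_of_mem_Pn {n p : ℕ} (hp : p ∈ Pn n) : p.Prime :=
  (mem_filter.mp hp).2.1

theorem rpow_neg_le_of_mem_Pn {n p : ℕ} (hp : p ∈ Pn n) {s : ℝ} (hs : 0 ≤ s) :
    (p : ℝ) ^ (-s) ≤ ((n : ℝ) / 2) ^ (-s) := by
  simp only [Pn, mem_filter, mem_range] at hp
  obtain ⟨hpn, hprime, hnp⟩ := hp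
  have hn : (0 : ℝ) < n / 2 := by
    have : 2 ≤ n := by have := hprime.two_le; omega
    positivity
  refine Real.rpow_le_rpow_of_nonpos hn ?_ (neg_nonpos.mpr hs)
  rw [div_le_iff₀ two_pos]
  exact_mod_cast (by omega : n ≤ p * 2)

theorem tsum_abs_rpow_dvd_dvd_le_of_mem_Pn {n p q : ℕ} (hp : p ∈ Pn n) (hq : q ∈ Pn n)
    (hpq : p ≠ q) {s : ℝ} (hs : 0 ≤ s) :
    ∑' h : {h : ℤ // h ≠ 0 ∧ (p : ℤ) ∣ h ∧ (q : ℤ) ∣ h}, |(h : ℝ)| ^ (-s) ≤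
      (((n : ℝ) / 2) ^ (-s)) ^ 2 * ∑' h : {h : ℤ // h ≠ 0}, |(h : ℝ)| ^ (-s) := by
  have hcop : p.Coprime q := (Nat.coprime_primes (prime_of_mem_Pn hp) (prime_of_mem_Pn hq)).mpr hpq
  rw [tsum_abs_rpow_dvd_and_dvd (prime_of_mem_Pn hp).ne_zero (prime_of_mem_Pn hq).ne_zero,
    hcop.lcm_eq_mul, Nat.cast_mul, Real.mul_rpow (Nat.cast_nonneg _) (Nat.cast_nonneg _), sq]
  refine mul_le_mul_of_nonneg_right ?_ (tsum_nonneg fun _ => by positivity)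
  exact mul_le_mul (rpow_neg_le_of_mem_Pn hp hs) (rpow_neg_le_of_mem_Pn hq hs) (by positivity)
    (by positivity)

theorem tsum_abs_rpow_dvd_self_le_of_mem_Pn {n p : ℕ} (hp : p ∈ Pn n) {s : ℝ} (hs : 0 ≤ s) :
    ∑' h : {h : ℤ // h ≠ 0 ∧ (p : ℤ) ∣ h ∧ (p : ℤ) ∣ h}, |(h : ℝ)| ^ (-s) ≤
      ((n : ℝ) / 2) ^ (-s) * ∑' h : {h : ℤ // h ≠ 0}, |(h : ℝ)| ^ (-s) := by
  have hp0 : p ≠ 0 := (prime_of_mem_Pn hp).ne_zero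
  rw [tsum_abs_rpow_dvd_and_dvd hp0 hp0, Nat.lcm_self]
  exact mul_le_mul_of_nonneg_right (rpow_neg_le_of_mem_Pn hp hs)
    (tsum_nonneg fun _ => by positivity)

theorem stmt15 (α : ℝ) (hα : 1 / 2 < α) (n : ℕ) (hn : 2 ≤ n)
    (c' : ℝ) (hc'0 : 0 < c')
    (hc' : c' * n / Real.log n < ((Pn n).card : ℝ)) :
    (1 / ((Pn n).card : ℝ) ^ 2) * ∑ p ∈ Pn n, ∑ q ∈ Pn n,
        ∑' h : {h : ℤ // h ≠ 0 ∧ (p : ℤ) ∣ h ∧ (q : ℤ) ∣ h},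
          (|(h : ℤ)| : ℝ) ^ (-(2 * α)) ≤
      (2 : ℝ) ^ (2 * α) * Real.log n / (c' * (n : ℝ) ^ (2 * α + 1)) *
          (∑' h : {h : ℤ // h ≠ 0}, (|(h : ℤ)| : ℝ) ^ (-(2 * α))) +
        (2 : ℝ) ^ (4 * α) / (n : ℝ) ^ (4 * α) *
          (∑' h : {h : ℤ // h ≠ 0}, (|(h : ℤ)| : ℝ) ^ (-(2 * α))) := by
  set S := ∑' h : {h : ℤ // h ≠ 0}, |(h : ℝ)| ^ (-(2 * α))
  set w := ((n : ℝ) / 2) ^ (-(2 * α)) with hw_def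
  have hs : 0 ≤ 2 * α := by linarith
  have hn0 : (0 : ℝ) < n := by positivity
  have hlog : 0 < Real.log n := Real.log_pos (by exact_mod_cast hn)
  have hK : 1 / ((Pn n).card : ℝ) ≤ Real.log n / (c' * n) := by
    calc 1 / ((Pn n).card : ℝ) ≤ 1 / (c' * n / Real.log n) :=
          one_div_le_one_div_of_le (by positivity) hc'.le
      _ = Real.log n / (c' * n) := one_div_div _ _
  have hw : w = 2 ^ (2 * α) / n ^ (2 * α) := by
    rw [hw_def, Real.rpow_neg (by positivity), Real.div_rpow hn0.le zero_le_two, inv_div]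
  calc _ ≤ w * S / (Pn n).card + w ^ 2 * S :=
        (Pn n).one_div_card_sq_mul_sum_sum_le _
          (fun p hp => tsum_abs_rpow_dvd_self_le_of_mem_Pn hp hs)
          (fun p hp q hq hpq => tsum_abs_rpow_dvd_dvd_le_of_mem_Pn hp hq hpq hs) (by positivity)
    _ ≤ w * S * (Real.log n / (c' * n)) + w ^ 2 * S := by
        rw [← mul_one_div]; gcongr
    _ = _ := by
        rw [show 4 * α = 2 * α * (2 : ℕ) by push_cast; ring, Real.rpow_mul_natCast zero_le_two,
          Real.rpow_mul_natCast hn0.le, Real.rpow_add_one hn0.ne', hw, div_pow]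
        field_simp
end

section
/- Let α > 1/2 and r(h) = |h|^{2α}. For z ≡ 1, the one-dimensional randomised error squared satisfies (1/|P_n|²) ∑_{p,q∈P_n} ∑_{h≠0, h ≡ 0 mod p, h ≡ 0 mod q} |h|^{−2α} ≤ inf_{λ∈[1/2,α)} (C'_λ ln n / n^{2λ+1}) (∑_{h≠0} |h|^{−α/λ})^{2λ} with C'_λ = 2^{2λ}/c' + 2^{4λ+1}. -/
/-!
Writing `S(s) = ∑_{h ≠ 0} |h|^{-s}`, the multiples of both `p` and `q` are exactly the multiples of
`lcm(p, q)`, so the inner sum is `lcm(p, q)^{-2α} S(2α)`. For distinct primes of `P_n` the lcm is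
`pq > (n/2)^2`, and on the diagonal it is `p > n/2`; hence the average over pairs is at most
`((n/2)^{-2α} / |P_n| + (n/2)^{-4α}) S(2α)`. Finally `S(2α) ≤ S(α/λ)^{2λ}`: each term `a` of a
nonnegative series with sum `T` satisfies `a^{2λ} ≤ a T^{2λ-1}` since `2λ ≥ 1`. The lower bound on
`|P_n|` turns `1 / |P_n|` into `ln n / (c' n)`.
-/

open scoped BigOperators Classical

theorem tsum_rpow_le_rpow_tsum {ι : Type*} {a : ι → ℝ} {θ : ℝ} (ha : Summable a)
    (h0 : ∀ i, 0 ≤ a i) (hθ : 1 ≤ θ) : ∑' i, a i ^ θ ≤ (∑' i, a i) ^ θ := by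
  have hle : ∀ i, a i ^ θ ≤ a i * (∑' j, a j) ^ (θ - 1) := fun i => by
    calc a i ^ θ = a i * a i ^ (θ - 1) := by
          rw [← Real.rpow_one_add' (h0 i) (by linarith)]; ring_nf
      _ ≤ a i * (∑' j, a j) ^ (θ - 1) := by
          gcongr
          exacts [h0 i, h0 i, ha.le_tsum i fun j _ => h0 j]
  have hsum : Summable (a · * (∑' j, a j) ^ (θ - 1)) := ha.mul_right _
  calc ∑' i, a i ^ θ ≤ ∑' i, a i * (∑' j, a j) ^ (θ - 1) :=
        (hsum.of_nonneg_of_le (fun i => Real.rpow_nonneg (h0 i) θ) hle).tsum_le_tsum hle hsum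
    _ = (∑' i, a i) ^ θ := by
        rw [tsum_mul_right, ← Real.rpow_one_add' (tsum_nonneg h0) (by linarith)]; ring_nf

theorem summable_abs_rpow_neg {s : ℝ} (hs : 1 < s) :
    Summable fun h : {h : ℤ // h ≠ 0} => |(h : ℝ)| ^ (-s) :=
  (Real.summable_abs_int_rpow hs).comp_injective Subtype.coe_injective

theorem tsum_abs_rpow_neg_mul_le_rpow {s θ : ℝ} (hs : 1 < s) (hθ : 1 ≤ θ) :
    ∑' h : {h : ℤ // h ≠ 0}, |(h : ℝ)| ^ (-(s * θ))
      ≤ (∑' h : {h : ℤ // h ≠ 0}, |(h : ℝ)| ^ (-s)) ^ θ := by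
  calc ∑' h : {h : ℤ // h ≠ 0}, |(h : ℝ)| ^ (-(s * θ))
      = ∑' h : {h : ℤ // h ≠ 0}, (|(h : ℝ)| ^ (-s)) ^ θ := by
        simp only [← Real.rpow_mul (abs_nonneg _), neg_mul]
    _ ≤ _ := tsum_rpow_le_rpow_tsum (summable_abs_rpow_neg hs) (fun _ => by positivity) hθ

theorem tsum_abs_rpow_neg_dvd {L : ℕ} (hL : 0 < L) (s : ℝ) :
    ∑' h : {h : ℤ // h ≠ 0 ∧ (L : ℤ) ∣ h}, |(h : ℝ)| ^ (-s)
      = (L : ℝ) ^ (-s) * ∑' h : {h : ℤ // h ≠ 0}, |(h : ℝ)| ^ (-s) := by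
  have hL0 : (L : ℤ) ≠ 0 := by exact_mod_cast hL.ne'
  let e : {h : ℤ // h ≠ 0} ≃ {h : ℤ // h ≠ 0 ∧ (L : ℤ) ∣ h} :=
    { toFun := fun m => ⟨L * m, mul_ne_zero hL0 m.2, dvd_mul_right _ _⟩
      invFun := fun h => ⟨h / L, by
        obtain ⟨h, hne, k, rfl⟩ := h
        rw [Int.mul_ediv_cancel_left _ hL0]
        exact right_ne_zero_of_mul hne⟩
      left_inv := fun m => Subtype.ext (Int.mul_ediv_cancel_left _ hL0)
      right_inv := fun h => Subtype.ext (Int.mul_ediv_cancel' h.2.2) }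
  rw [← e.tsum_eq, ← tsum_mul_left]
  refine tsum_congr fun m => ?_
  simp only [e, Equiv.coe_fn_mk, Int.cast_mul, Int.cast_natCast, abs_mul, Nat.abs_cast]
  exact Real.mul_rpow (Nat.cast_nonneg L) (abs_nonneg _)

theorem tsum_abs_rpow_neg_dvd_and_dvd {p q : ℕ} (hp : 0 < p) (hq : 0 < q) (s : ℝ) :
    ∑' h : {h : ℤ // h ≠ 0 ∧ (p : ℤ) ∣ h ∧ (q : ℤ) ∣ h}, |(h : ℝ)| ^ (-s)
      = (p.lcm q : ℝ) ^ (-s) * ∑' h : {h : ℤ // h ≠ 0}, |(h : ℝ)| ^ (-s) := by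
  have hdvd (h : ℤ) : (h ≠ 0 ∧ (p : ℤ) ∣ h ∧ (q : ℤ) ∣ h) ↔ (h ≠ 0 ∧ ((p.lcm q : ℕ) : ℤ) ∣ h) := by
    simp only [Int.natCast_dvd, Nat.lcm_dvd_iff]
  rw [← tsum_abs_rpow_neg_dvd (Nat.lcm_pos hp hq)]
  exact (Equiv.subtypeEquivRight hdvd).tsum_eq (fun h => |((h : ℤ) : ℝ)| ^ (-s))

theorem lcm_rpow_neg_le {p q : ℕ} (hp : p.Prime) (hq : q.Prime) {m s : ℝ} (hm : 0 < m)
    (hs : 0 ≤ s) (hmp : m < p) (hmq : m < q) :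
    (p.lcm q : ℝ) ^ (-s) ≤ (if p = q then m ^ (-s) else 0) + m ^ (-s) * m ^ (-s) := by
  have hx : 0 ≤ m ^ (-s) := by positivity
  have hpm : (p : ℝ) ^ (-s) ≤ m ^ (-s) := Real.rpow_le_rpow_of_nonpos hm hmp.le (by linarith)
  have hqm : (q : ℝ) ^ (-s) ≤ m ^ (-s) := Real.rpow_le_rpow_of_nonpos hm hmq.le (by linarith)
  split_ifs with hpq
  · subst hpq
    rw [Nat.lcm_self]
    nlinarith [mul_nonneg hx hx]
  · rw [((Nat.coprime_primes hp hq).2 hpq).lcm_eq_mul, Nat.cast_mul,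
      Real.mul_rpow (Nat.cast_nonneg p) (Nat.cast_nonneg q), zero_add]
    exact mul_le_mul hpm hqm (by positivity) hx

theorem sum_sum_lcm_rpow_neg_le {P : Finset ℕ} {m s : ℝ} (hm : 0 < m) (hs : 0 ≤ s)
    (hP : ∀ p ∈ P, p.Prime ∧ m < p) :
    ∑ p ∈ P, ∑ q ∈ P, (p.lcm q : ℝ) ^ (-s)
      ≤ P.card * m ^ (-s) + (P.card * m ^ (-s)) ^ 2 := by
  calc ∑ p ∈ P, ∑ q ∈ P, (p.lcm q : ℝ) ^ (-s)
      ≤ ∑ p ∈ P, ∑ q ∈ P, ((if p = q then m ^ (-s) else 0) + m ^ (-s) * m ^ (-s)) :=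
        Finset.sum_le_sum fun p hp => Finset.sum_le_sum fun q hq =>
          lcm_rpow_neg_le (hP p hp).1 (hP q hq).1 hm hs (hP p hp).2 (hP q hq).2
    _ = P.card * m ^ (-s) + (P.card * m ^ (-s)) ^ 2 := by
        simp only [Finset.sum_add_distrib, Finset.sum_ite_eq, Finset.sum_const, nsmul_eq_mul]
        rw [Finset.sum_congr rfl fun p hp => if_pos hp, Finset.sum_const, nsmul_eq_mul]
        ring

theorem half_rpow_neg_le {x α lam : ℝ} (hx : 2 ≤ x) (hlam : lam ≤ α) :
    (x / 2) ^ (-(2 * α)) ≤ 2 ^ (2 * lam) / x ^ (2 * lam) := by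
  calc (x / 2) ^ (-(2 * α)) ≤ (x / 2) ^ (-(2 * lam)) :=
        Real.rpow_le_rpow_of_exponent_le (by linarith) (by linarith)
    _ = 2 ^ (2 * lam) / x ^ (2 * lam) := by
        rw [Real.rpow_neg (by linarith), Real.div_rpow (by linarith) zero_le_two, inv_div]

theorem half_rpow_neg_div_le {x c c' α lam : ℝ} (hx : 2 ≤ x) (hlam : lam ≤ α) (hc'0 : 0 < c')
    (hc' : c' * x / Real.log x < c) :
    (x / 2) ^ (-(2 * α)) / c ≤ 2 ^ (2 * lam) / c' * Real.log x / x ^ (2 * lam + 1) := by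
  have hlog : 0 < Real.log x := Real.log_pos (by linarith)
  have hc : 0 < c := lt_trans (by positivity) hc'
  have hinv : 1 / c ≤ Real.log x / (c' * x) := by
    rw [div_le_div_iff₀ hc (by positivity)]
    linarith [(div_lt_iff₀ hlog).mp hc']
  calc (x / 2) ^ (-(2 * α)) / c = (x / 2) ^ (-(2 * α)) * (1 / c) := by ring
    _ ≤ 2 ^ (2 * lam) / x ^ (2 * lam) * (Real.log x / (c' * x)) :=
        mul_le_mul (half_rpow_neg_le hx hlam) hinv (by positivity) (by positivity)
    _ = 2 ^ (2 * lam) / c' * Real.log x / x ^ (2 * lam + 1) := by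
        rw [Real.rpow_add_one (by positivity)]
        field_simp

theorem sq_half_rpow_neg_le {x α lam : ℝ} (hx : 2 ≤ x) (hlam : 1 / 2 ≤ lam) (hlamα : lam ≤ α) :
    ((x / 2) ^ (-(2 * α))) ^ 2 ≤ 2 ^ (4 * lam + 1) * Real.log x / x ^ (2 * lam + 1) := by
  have hlog : 1 ≤ 2 * Real.log x := by
    linarith [Real.log_two_gt_d9, Real.log_le_log two_pos hx]
  have hpow : x ^ (2 * lam + 1) ≤ x ^ (4 * lam) :=
    Real.rpow_le_rpow_of_exponent_le (by linarith) (by linarith)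
  calc ((x / 2) ^ (-(2 * α))) ^ 2 ≤ (2 ^ (2 * lam) / x ^ (2 * lam)) ^ 2 := by
        gcongr
        exact half_rpow_neg_le hx hlamα
    _ = 2 ^ (4 * lam) / x ^ (4 * lam) := by
        rw [div_pow, ← Real.rpow_mul_natCast zero_le_two, ← Real.rpow_mul_natCast (by linarith)]
        ring_nf
    _ ≤ 2 ^ (4 * lam) * (2 * Real.log x) / x ^ (2 * lam + 1) := by
        gcongr
        exact le_mul_of_one_le_right (by positivity) hlog
    _ = 2 ^ (4 * lam + 1) * Real.log x / x ^ (2 * lam + 1) := by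
        rw [Real.rpow_add_one two_ne_zero]; ring

theorem prime_and_half_lt_of_mem_Pn {n p : ℕ} (hp : p ∈ Pn n) : p.Prime ∧ (n : ℝ) / 2 < p := by
  simp only [Pn, Finset.mem_filter, Finset.mem_range] at hp
  refine ⟨hp.2.1, ?_⟩
  have : (n : ℝ) < 2 * p := by exact_mod_cast hp.2.2
  linarith

theorem stmt17_general (α : ℝ) (n : ℕ) (hn : 2 ≤ n)
    (c' : ℝ) (hc'0 : 0 < c')
    (hc' : c' * n / Real.log n < ((Pn n).card : ℝ)) :
    ∀ lam : ℝ, 1 / 2 ≤ lam → lam < α →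
      (1 / ((Pn n).card : ℝ) ^ 2) * ∑ p ∈ Pn n, ∑ q ∈ Pn n,
          ∑' h : {h : ℤ // h ≠ 0 ∧ (p : ℤ) ∣ h ∧ (q : ℤ) ∣ h},
            (|(h : ℤ)| : ℝ) ^ (-(2 * α)) ≤
        ((2 : ℝ) ^ (2 * lam) / c' + 2 ^ (4 * lam + 1)) * Real.log n /
            (n : ℝ) ^ (2 * lam + 1) *
          (∑' h : {h : ℤ // h ≠ 0}, (|(h : ℤ)| : ℝ) ^ (-(α / lam))) ^ (2 * lam) := by
  intro lam hlam hlamα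
  have hn2 : (2 : ℝ) ≤ n := by exact_mod_cast hn
  have hc : (0 : ℝ) < (Pn n).card :=
    lt_trans (div_pos (by positivity) (Real.log_pos (by linarith))) hc'
  set c : ℝ := ((Pn n).card : ℝ)
  set x : ℝ := ((n : ℝ) / 2) ^ (-(2 * α))
  set S := ∑' h : {h : ℤ // h ≠ 0}, |(h : ℝ)| ^ (-(2 * α))
  have hS : S ≤ (∑' h : {h : ℤ // h ≠ 0}, |(h : ℝ)| ^ (-(α / lam))) ^ (2 * lam) := by
    have hα : α / lam * (2 * lam) = 2 * α := by field_simp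
    have := tsum_abs_rpow_neg_mul_le_rpow (θ := 2 * lam) ((one_lt_div (by linarith)).2 hlamα)
      (by linarith)
    rwa [hα] at this
  have hpairs : ∑ p ∈ Pn n, ∑ q ∈ Pn n, (p.lcm q : ℝ) ^ (-(2 * α)) ≤ c * x + (c * x) ^ 2 :=
    sum_sum_lcm_rpow_neg_le (by linarith) (by linarith) fun p hp => prime_and_half_lt_of_mem_Pn hp
  calc (1 / c ^ 2) * ∑ p ∈ Pn n, ∑ q ∈ Pn n,
          ∑' h : {h : ℤ // h ≠ 0 ∧ (p : ℤ) ∣ h ∧ (q : ℤ) ∣ h}, |(h : ℝ)| ^ (-(2 * α))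
      = (1 / c ^ 2) * ((∑ p ∈ Pn n, ∑ q ∈ Pn n, (p.lcm q : ℝ) ^ (-(2 * α))) * S) := by
        simp only [Finset.sum_mul]
        congr 1
        refine Finset.sum_congr rfl fun p hp => Finset.sum_congr rfl fun q hq => ?_
        exact tsum_abs_rpow_neg_dvd_and_dvd (prime_and_half_lt_of_mem_Pn hp).1.pos
          (prime_and_half_lt_of_mem_Pn hq).1.pos _
    _ ≤ (1 / c ^ 2) * ((c * x + (c * x) ^ 2) * S) := by gcongr
    _ = (x / c + x ^ 2) * S := by field_simp
    _ ≤ (2 ^ (2 * lam) / c' * Real.log n / (n : ℝ) ^ (2 * lam + 1)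
          + 2 ^ (4 * lam + 1) * Real.log n / (n : ℝ) ^ (2 * lam + 1))
          * (∑' h : {h : ℤ // h ≠ 0}, |(h : ℝ)| ^ (-(α / lam))) ^ (2 * lam) := by
        gcongr (?_ + ?_) * ?_
        · exact half_rpow_neg_div_le hn2 hlamα.le hc'0 hc'
        · exact sq_half_rpow_neg_le hn2 hlam hlamα.le
    _ = _ := by ring

theorem stmt17 (α : ℝ) (hα : 1 / 2 < α) (n : ℕ) (hn : 2 ≤ n)
    (c' : ℝ) (hc'0 : 0 < c')
    (hc' : c' * n / Real.log n < ((Pn n).card : ℝ)) :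
    ∀ lam : ℝ, 1 / 2 ≤ lam → lam < α →
      (1 / ((Pn n).card : ℝ) ^ 2) * ∑ p ∈ Pn n, ∑ q ∈ Pn n,
          ∑' h : {h : ℤ // h ≠ 0 ∧ (p : ℤ) ∣ h ∧ (q : ℤ) ∣ h},
            (|(h : ℤ)| : ℝ) ^ (-(2 * α)) ≤
        ((2 : ℝ) ^ (2 * lam) / c' + 2 ^ (4 * lam + 1)) * Real.log n /
            (n : ℝ) ^ (2 * lam + 1) *
          (∑' h : {h : ℤ // h ≠ 0}, (|(h : ℤ)| : ℝ) ^ (-(α / lam))) ^ (2 * lam) :=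
  stmt17_general α n hn c' hc'0 hc'
end

section
/- Let α > 1/2 be an integer and p prime. For product weights γ_j > 0, z = (z_1,…,z_s) ∈ Z^s with gcd(z_s, p) arbitrary, the quantity θ(z_s) := ∑_{h∈Z^s, h_s ≠ 0, h·z ≡ 0 mod p} ∏_{j∈supp(h)} γ_j² |h_j|^{−2α} equals (γ_s²/p) ∑_{k=0}^{p−1} σ_α(k z_s/p) ∏_{j=1}^{s−1} (1 + γ_j² σ_α(k z_j/p)), where σ_α(x) = ∑_{h≠0} e^{2πihx}/|h|^{2α}. -/
open scoped BigOperators Classical Real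

/-- `σ_α(x) = ∑_{h ≠ 0} e^{2πihx} / |h|^{2α}`. -/
noncomputable def sigmaA (α : ℕ) (x : ℝ) : ℂ :=
  ∑' h : {h : ℤ // h ≠ 0},
    Complex.exp (2 * (π : ℂ) * Complex.I * ((h : ℤ) : ℂ) * (x : ℂ)) /
      (((|(h : ℤ)| : ℝ) ^ (2 * α) : ℝ) : ℂ)

/-!
Write the congruence `p ∣ h ⬝ z` through the character sum
`𝟙(p ∣ m) = p⁻¹ ∑_{k < p} e^{2πikm/p}`. For fixed `k`, the weighted sum over `h ∈ ℤ^s` of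
`e^{2πik (h ⬝ z)/p}` converges absolutely and so factors into a product over the coordinates of
one-dimensional sums, each equal to `b_j + γ_j² σ_α(k z_j / p)`, where `b_j` is the weight given
to `h_j = 0`. Taking `b_j = 1` for `j < s` and `b_s = 0` discards the `h` with `h_s = 0`.
-/

section ProdTsum

variable {R κ : Type*} [NormedCommRing R]

lemma summable_norm_prod_pi {n : ℕ} {c : Fin n → κ → R}
    (hc : ∀ j, Summable fun h => ‖c j h‖) :
    Summable fun h : Fin n → κ => ‖∏ j, c j (h j)‖ := by
  induction n with
  | zero => exact .of_finite
  | succ n ih =>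
    refine (Equiv.summable_iff (Fin.consEquiv fun _ => κ)).mp ?_
    refine ((hc 0).mul_norm (ih fun j => hc j.succ)).congr fun q => ?_
    simp [Fin.prod_univ_succ]

lemma tsum_prod_pi [CompleteSpace R] {n : ℕ} {c : Fin n → κ → R}
    (hc : ∀ j, Summable fun h => ‖c j h‖) :
    ∑' h : Fin n → κ, ∏ j, c j (h j) = ∏ j, ∑' h, c j h := by
  induction n with
  | zero => simp
  | succ n ih =>
    rw [Fin.prod_univ_succ, ← ih fun j => hc j.succ,
      tsum_mul_tsum_of_summable_norm (hc 0) (summable_norm_prod_pi fun j => hc j.succ),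
      ← (Fin.consEquiv fun _ => κ).tsum_eq]
    simp [Fin.prod_univ_succ]

end ProdTsum

lemma sum_range_exp_eq_ite {p : ℕ} (hp : p ≠ 0) (m : ℤ) :
    ∑ k ∈ Finset.range p, Complex.exp (2 * π * Complex.I * k * m / p) =
      if (p : ℤ) ∣ m then (p : ℂ) else 0 := by
  have hζ := Complex.isPrimitiveRoot_exp p hp
  set ω := Complex.exp (2 * π * Complex.I / p) ^ m
  have hω : ∀ k : ℕ, Complex.exp (2 * π * Complex.I * k * m / p) = ω ^ k := by
    intro k
    rw [← zpow_natCast, ← zpow_mul, ← Complex.exp_int_mul]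
    congr 1; push_cast; ring
  simp only [hω]
  split_ifs with hdvd
  · simp [ω, (hζ.zpow_eq_one_iff_dvd m).mpr hdvd]
  · have hω1 : ω ≠ 1 := fun h => hdvd ((hζ.zpow_eq_one_iff_dvd m).mp h)
    have hωp : ω ^ p = 1 := by
      rw [← zpow_natCast, ← zpow_mul, mul_comm m, zpow_mul, zpow_natCast, hζ.pow_eq_one, one_zpow]
    rw [geom_sum_eq hω1, hωp, sub_self, zero_div]

lemma norm_exp_two_pi_I_int_mul (h : ℤ) (x : ℝ) :
    ‖Complex.exp (2 * π * Complex.I * h * x)‖ = 1 := by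
  simp [Complex.norm_exp]

lemma summable_inv_abs_pow {α : ℕ} (hα : 1 ≤ α) :
    Summable fun h : ℤ => (|(h : ℝ)| ^ (2 * α))⁻¹ := by
  refine (Real.summable_one_div_int_pow.mpr (by omega : 1 < 2 * α)).congr fun h => ?_
  rw [one_div, Even.pow_abs (even_two_mul α)]

noncomputable def coordWeight (α : ℕ) (g b : ℝ) (h : ℤ) : ℝ :=
  if h = 0 then b else g ^ 2 * (|(h : ℝ)| ^ (2 * α))⁻¹

lemma summable_coordWeight {α : ℕ} (hα : 1 ≤ α) (g b : ℝ) :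
    Summable (coordWeight α g b) := by
  refine (((summable_inv_abs_pow hα).mul_left (g ^ 2)).update 0 b).congr fun h => ?_
  by_cases h0 : h = 0 <;> simp [coordWeight, Function.update, h0]

lemma hasSum_sigmaA {α : ℕ} (hα : 1 ≤ α) (x : ℝ) :
    HasSum (fun h : {h : ℤ // h ≠ 0} =>
      Complex.exp (2 * π * Complex.I * (h : ℤ) * x) / ((|((h : ℤ) : ℝ)| ^ (2 * α) : ℝ) : ℂ))
      (sigmaA α x) := by
  refine Summable.hasSum (Summable.of_norm ?_)
  refine ((summable_inv_abs_pow hα).subtype _).congr fun h => ?_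
  rw [norm_div, norm_exp_two_pi_I_int_mul, Complex.norm_real, Real.norm_of_nonneg (by positivity),
    one_div]
  rfl

lemma hasSum_coordWeight_mul_exp {α : ℕ} (hα : 1 ≤ α) (g b x : ℝ) :
    HasSum (fun h : ℤ => (coordWeight α g b h : ℂ) * Complex.exp (2 * π * Complex.I * h * x))
      (b + g ^ 2 * sigmaA α x) := by
  have hzero : HasSum (fun h : ℤ => if h = 0 then (b : ℂ) else 0) b := hasSum_ite_eq _ _
  have hnonzero : HasSum ({h : ℤ | h ≠ 0}.indicator fun h : ℤ => (g : ℂ) ^ 2 *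
      (Complex.exp (2 * π * Complex.I * h * x) / ((|(h : ℝ)| ^ (2 * α) : ℝ) : ℂ)))
      ((g : ℂ) ^ 2 * sigmaA α x) :=
    hasSum_subtype_iff_indicator.mp ((hasSum_sigmaA hα x).mul_left _)
  convert hzero.add hnonzero using 1
  ext h
  by_cases h0 : h = 0
  · simp [coordWeight, h0]
  · simp [coordWeight, h0]
    ring

lemma hasSum_prod_coordWeight_mul_exp {α : ℕ} (hα : 1 ≤ α) {n : ℕ} (γ b x : Fin n → ℝ) :
    HasSum (fun h : Fin n → ℤ => ((∏ j, coordWeight α (γ j) (b j) (h j) : ℝ) : ℂ) *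
        Complex.exp (2 * π * Complex.I * ∑ j, (h j : ℂ) * x j))
      (∏ j, (b j + γ j ^ 2 * sigmaA α (x j))) := by
  set c : Fin n → ℤ → ℂ := fun j h =>
    (coordWeight α (γ j) (b j) h : ℂ) * Complex.exp (2 * π * Complex.I * h * x j)
  have hc : ∀ j, Summable fun h => ‖c j h‖ := fun j =>
    (summable_coordWeight hα (γ j) (b j)).abs.congr fun h => by
      simp [c, norm_exp_two_pi_I_int_mul]
  have hfactor : ∀ h : Fin n → ℤ, ((∏ j, coordWeight α (γ j) (b j) (h j) : ℝ) : ℂ) *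
      Complex.exp (2 * π * Complex.I * ∑ j, (h j : ℂ) * x j) = ∏ j, c j (h j) := by
    intro h
    simp only [c, Finset.prod_mul_distrib, Complex.ofReal_prod, Finset.mul_sum, Complex.exp_sum,
      mul_assoc]
  simp only [hfactor]
  refine (summable_norm_prod_pi hc).of_norm.hasSum_iff.mpr ?_
  rw [tsum_prod_pi hc]
  exact Finset.prod_congr rfl fun j _ => (hasSum_coordWeight_mul_exp hα _ _ _).tsum_eq

lemma natCast_mul_tsum_ite_dvd_eq_sum_range {α : ℕ} (hα : 1 ≤ α) {p : ℕ} (hp : p ≠ 0) {n : ℕ}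
    (γ b : Fin n → ℝ) (z : Fin n → ℤ) :
    (p : ℂ) * ((∑' h : Fin n → ℤ,
        if (p : ℤ) ∣ ∑ j, h j * z j then ∏ j, coordWeight α (γ j) (b j) (h j) else 0 : ℝ) : ℂ) =
      ∑ k ∈ Finset.range p, ∏ j, (b j + γ j ^ 2 * sigmaA α (k * z j / p)) := by
  have hsum (k : ℕ) := hasSum_prod_coordWeight_mul_exp hα γ b fun j => k * z j / p
  have hchar : ∀ h : Fin n → ℤ, (p : ℂ) *
      ((if (p : ℤ) ∣ ∑ j, h j * z j then ∏ j, coordWeight α (γ j) (b j) (h j) else 0 : ℝ) : ℂ) =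
      ∑ k ∈ Finset.range p, ((∏ j, coordWeight α (γ j) (b j) (h j) : ℝ) : ℂ) *
        Complex.exp (2 * π * Complex.I * ∑ j, (h j : ℂ) * ((k * z j / p : ℝ) : ℂ)) := by
    intro h
    have hphase : ∀ k : ℕ, 2 * π * Complex.I * ∑ j, (h j : ℂ) * ((k * z j / p : ℝ) : ℂ) =
        2 * π * Complex.I * k * ((∑ j, h j * z j : ℤ) : ℂ) / p := by
      intro k
      push_cast
      rw [Finset.mul_sum, Finset.mul_sum, Finset.sum_div]
      exact Finset.sum_congr rfl fun j _ => by ring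
    simp only [hphase, ← Finset.mul_sum, sum_range_exp_eq_ite hp]
    split_ifs <;> simp [mul_comm]
  rw [Complex.ofReal_tsum, ← tsum_mul_left, tsum_congr hchar,
    Summable.tsum_finsetSum fun k _ => (hsum k).summable]
  exact Finset.sum_congr rfl fun k _ => (hsum k).tsum_eq

lemma prod_coordWeight_ite_last (α : ℕ) {d : ℕ} (γ : Fin (d + 1) → ℝ) (h : Fin (d + 1) → ℤ) :
    ∏ j, coordWeight α (γ j) (if j = Fin.last d then 0 else 1) (h j) =
      if h (Fin.last d) = 0 then 0
      else ∏ j ∈ Finset.univ.filter (fun j => h j ≠ 0), γ j ^ 2 * (|(h j : ℝ)| ^ (2 * α))⁻¹ := by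
  split_ifs with hlast
  · exact Finset.prod_eq_zero (Finset.mem_univ (Fin.last d)) (by simp [coordWeight, hlast])
  · rw [Finset.prod_filter]
    refine Finset.prod_congr rfl fun j _ => ?_
    by_cases hj : h j = 0
    · have hj_last : j ≠ Fin.last d := by rintro rfl; exact hlast hj
      simp [coordWeight, hj, hj_last]
    · simp [coordWeight, hj]

lemma tsum_last_ne_zero_dvd_eq_tsum_coordWeight (α p : ℕ) {d : ℕ} (γ : Fin (d + 1) → ℝ)
    (z : Fin (d + 1) → ℤ) :
    ∑' h : {h : Fin (d + 1) → ℤ // h (Fin.last d) ≠ 0 ∧ (p : ℤ) ∣ ∑ j, h j * z j},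
        ∏ j ∈ Finset.univ.filter (fun j => h.1 j ≠ 0), γ j ^ 2 * ((|h.1 j| : ℝ) ^ (2 * α))⁻¹ =
      ∑' h : Fin (d + 1) → ℤ, if (p : ℤ) ∣ ∑ j, h j * z j then
        ∏ j, coordWeight α (γ j) (if j = Fin.last d then 0 else 1) (h j) else 0 := by
  refine (tsum_subtype {h : Fin (d + 1) → ℤ | h (Fin.last d) ≠ 0 ∧ (p : ℤ) ∣ ∑ j, h j * z j}
    fun h => ∏ j ∈ Finset.univ.filter (fun j => h j ≠ 0), γ j ^ 2 * ((|h j| : ℝ) ^ (2 * α))⁻¹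
    ).trans (tsum_congr fun h => ?_)
  rw [Set.indicator_apply, prod_coordWeight_ite_last]
  by_cases hdvd : (p : ℤ) ∣ ∑ j, h j * z j <;> by_cases hlast : h (Fin.last d) = 0 <;>
    simp [hdvd, hlast]

theorem stmt18_general (α : ℕ) (hα : 1 ≤ α) (p : ℕ) (hp : p.Prime)
    (d : ℕ) (γ : Fin (d + 1) → ℝ) (z : Fin (d + 1) → ℤ) :
    ((∑' h : {h : Fin (d + 1) → ℤ //
        h (Fin.last d) ≠ 0 ∧ (p : ℤ) ∣ ∑ j, h j * z j},
        ∏ j ∈ Finset.univ.filter (fun j => h.1 j ≠ 0),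
          γ j ^ 2 * ((|h.1 j| : ℝ) ^ (2 * α))⁻¹ : ℝ) : ℂ) =
      ((γ (Fin.last d) ^ 2 / p : ℝ) : ℂ) * ∑ k ∈ Finset.range p,
        sigmaA α ((k : ℝ) * (z (Fin.last d) : ℝ) / p) *
          ∏ j : Fin d,
            (1 + ((γ j.castSucc ^ 2 : ℝ) : ℂ) *
              sigmaA α ((k : ℝ) * (z j.castSucc : ℝ) / p)) := by
  have hp0 : (p : ℂ) ≠ 0 := Nat.cast_ne_zero.mpr hp.ne_zero
  rw [tsum_last_ne_zero_dvd_eq_tsum_coordWeight, ← mul_right_inj' hp0,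
    natCast_mul_tsum_ite_dvd_eq_sum_range hα hp.ne_zero, Finset.mul_sum, Finset.mul_sum]
  refine Finset.sum_congr rfl fun k _ => ?_
  simp only [Fin.prod_univ_castSucc, Fin.castSucc_ne_last, if_true, if_false]
  push_cast
  field_simp
  ring

theorem stmt18 (α : ℕ) (hα : 1 ≤ α) (p : ℕ) (hp : p.Prime)
    (d : ℕ) (γ : Fin (d + 1) → ℝ) (hγ : ∀ j, 0 < γ j) (z : Fin (d + 1) → ℤ) :
    ((∑' h : {h : Fin (d + 1) → ℤ //
        h (Fin.last d) ≠ 0 ∧ (p : ℤ) ∣ ∑ j, h j * z j},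
        ∏ j ∈ Finset.univ.filter (fun j => h.1 j ≠ 0),
          γ j ^ 2 * ((|h.1 j| : ℝ) ^ (2 * α))⁻¹ : ℝ) : ℂ) =
      ((γ (Fin.last d) ^ 2 / p : ℝ) : ℂ) * ∑ k ∈ Finset.range p,
        sigmaA α ((k : ℝ) * (z (Fin.last d) : ℝ) / p) *
          ∏ j : Fin d,
            (1 + ((γ j.castSucc ^ 2 : ℝ) : ℂ) *
              sigmaA α ((k : ℝ) * (z j.castSucc : ℝ) / p)) :=
  stmt18_general α hα p hp d γ z
end

section
/- Let λ > 1/2. The function g(τ) = (1/(1−τ))^{2λ} (1−τ²)/(2τ) on (0,1) attains its minimum at τ* = (√(λ² + 2λ − 1) − λ)/(2λ − 1), and g(τ*) ≤ 3λ; moreover 2/τ* ≤ 2(1+√2)λ. -/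
/-!
On `(0, 1)` we have `g = exp F` with `F τ = (1 - 2λ) log (1 - τ) + log (1 + τ) - log (2τ)`, and
`F'` has the sign of `(2λ - 1) τ² + 2λ τ - 1`, whose root in `(0, 1)` is
`τ* = 1 / (λ + √(λ² + 2λ - 1))`. This gives the minimum, and `2 / τ* = 2 (λ + √(λ² + 2λ - 1))`.
At the root, `2λ - 1 = (1 - τ*) / (τ* (1 + τ*))` and `3λ = 3 (1 + τ*²) / (1 + τ*)² · (1 + τ*) / (2τ*)`,
so `g τ* ≤ 3λ` reduces to `-(1 - t) log (1 - t) ≤ t (1 + t) log (3 (1 + t²) / (1 + t)²)` on `(0, 1)`.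
This follows from `-log (1 - x) ≤ x + x² / 2 + x³ / (3 (1 - x))` at `x = t` and
`x = 2t / (1 + t)²`, together with `log 3 > 1.09`.
-/

open Real Set

theorem neg_log_one_sub_le_sum_range_add {x : ℝ} (hx₀ : 0 ≤ x) (hx₁ : x < 1) (n : ℕ) :
    -log (1 - x) ≤
      ∑ i ∈ Finset.range n, x ^ (i + 1) / (i + 1) + x ^ (n + 1) / ((n + 1) * (1 - x)) := by
  have hlog := hasSum_pow_div_log_of_abs_lt_one (by rwa [abs_of_nonneg hx₀])
  have htail := (hasSum_nat_add_iff' n).mpr hlog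
  have hgeom := (hasSum_geometric_of_lt_one hx₀ hx₁).mul_left (x ^ (n + 1) / (n + 1))
  rw [← div_eq_mul_inv, div_div] at hgeom
  have htail_le := hasSum_le (fun k => ?_) htail hgeom
  · linarith
  · rw [div_mul_eq_mul_div, ← pow_add, show n + 1 + k = k + n + 1 by ring]
    push_cast
    gcongr
    linarith

theorem neg_log_one_sub_le_cubic {x : ℝ} (hx₀ : 0 ≤ x) (hx₁ : x < 1) :
    -log (1 - x) ≤ x + x ^ 2 / 2 + x ^ 3 / (3 * (1 - x)) := by
  have h := neg_log_one_sub_le_sum_range_add hx₀ hx₁ 2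
  norm_num [Finset.sum_range_succ] at h
  exact h

theorem one_sub_mul_neg_log_one_sub_le {t : ℝ} (ht₀ : 0 < t) (ht₁ : t < 1) :
    (1 - t) * -log (1 - t) ≤ t * (1 + t) * log (3 * (1 + t ^ 2) / (1 + t) ^ 2) := by
  set s := 2 * t / (1 + t) ^ 2 with hs
  have hs₁ : 1 - s = (1 + t ^ 2) / (1 + t) ^ 2 := by
    rw [hs]; field_simp; ring
  have hs_nonneg : 0 ≤ s := by positivity
  have hs_lt_one : s < 1 := by
    rw [← sub_pos, hs₁]; positivity
  -- Cleared of denominators this is a polynomial inequality of degree 8, tightest near `t = 3/10`,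
  -- where the margin is about `0.005`.
  have hpoly : (1 - t) * (t + t ^ 2 / 2 + t ^ 3 / (3 * (1 - t)))
      ≤ t * (1 + t) * (1.09 - (s + s ^ 2 / 2 + s ^ 3 / (3 * (1 - s)))) := by
    have : 0 < 1 - t := by linarith
    rw [hs₁, hs, ← sub_nonneg]
    field_simp
    norm_num
    nlinarith [mul_nonneg ht₀.le (sq_nonneg (t - 3 / 10)), sq_nonneg (t - 3 / 10),
      mul_nonneg (mul_nonneg ht₀.le ht₀.le) (sq_nonneg (t - 3 / 10)), pow_nonneg ht₀.le 3,
      pow_nonneg ht₀.le 4, pow_nonneg ht₀.le 5, pow_nonneg ht₀.le 6, pow_nonneg ht₀.le 7]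
  have hlog : log (3 * (1 + t ^ 2) / (1 + t) ^ 2) = log 3 + log (1 - s) := by
    rw [hs₁, mul_div_assoc, log_mul (by norm_num) (by positivity)]
  calc (1 - t) * -log (1 - t)
      ≤ (1 - t) * (t + t ^ 2 / 2 + t ^ 3 / (3 * (1 - t))) := by
        gcongr
        exact neg_log_one_sub_le_cubic ht₀.le ht₁
    _ ≤ t * (1 + t) * (1.09 - (s + s ^ 2 / 2 + s ^ 3 / (3 * (1 - s)))) := hpoly
    _ ≤ t * (1 + t) * log (3 * (1 + t ^ 2) / (1 + t) ^ 2) := by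
        have := neg_log_one_sub_le_cubic hs_nonneg hs_lt_one
        have := log_three_gt_d9
        rw [hlog]
        gcongr
        linarith

noncomputable def logObjective (lam τ : ℝ) : ℝ :=
  (1 - 2 * lam) * log (1 - τ) + log (1 + τ) - log (2 * τ)

theorem objective_eq_exp_logObjective (lam : ℝ) {τ : ℝ} (hτ₀ : 0 < τ) (hτ₁ : τ < 1) :
    (1 / (1 - τ)) ^ (2 * lam) * (1 - τ ^ 2) / (2 * τ) = exp (logObjective lam τ) := by
  have h₁ : 0 < 1 - τ := by linarith
  have h₂ : 0 < 1 + τ := by linarith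
  rw [logObjective, exp_sub, exp_add, exp_log h₂, exp_log (by positivity),
    rpow_def_of_pos (by positivity), one_div, log_inv,
    show (1 - 2 * lam) * log (1 - τ) = log (1 - τ) + -log (1 - τ) * (2 * lam) by ring,
    exp_add, exp_log h₁]
  ring

theorem hasDerivAt_logObjective (lam : ℝ) {τ : ℝ} (hτ₀ : 0 < τ) (hτ₁ : τ < 1) :
    HasDerivAt (logObjective lam)
      (((2 * lam - 1) * τ ^ 2 + 2 * lam * τ - 1) / (τ * (1 - τ) * (1 + τ))) τ := by
  have h₁ : 0 < 1 - τ := by linarith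
  have h₂ : 0 < 1 + τ := by linarith
  have hlog₁ := ((hasDerivAt_id τ).const_sub 1).log h₁.ne'
  have hlog₂ := ((hasDerivAt_id τ).const_add 1).log h₂.ne'
  have hlog₃ := ((hasDerivAt_id τ).const_mul 2).log (by positivity)
  refine ((hlog₁.const_mul (1 - 2 * lam)).add hlog₂ |>.sub hlog₃).congr_deriv ?_
  simp only [id]
  field_simp
  ring

theorem isMinOn_logObjective {lam τ₀ : ℝ} (hlam : 1 / 2 < lam) (hτ₀ : 0 < τ₀) (hτ₁ : τ₀ < 1)
    (hroot : (2 * lam - 1) * τ₀ ^ 2 + 2 * lam * τ₀ - 1 = 0) :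
    IsMinOn (logObjective lam) (Ioo 0 1) τ₀ := by
  have hderiv : ∀ τ ∈ Ioo (0 : ℝ) 1, HasDerivAt (logObjective lam)
      ((τ - τ₀) * ((2 * lam - 1) * (τ + τ₀) + 2 * lam) / (τ * (1 - τ) * (1 + τ))) τ := by
    intro τ ⟨h₀, h₁⟩
    convert hasDerivAt_logObjective lam h₀ h₁ using 2
    linear_combination -hroot
  have hden : ∀ τ ∈ Ioo (0 : ℝ) 1, 0 < τ * (1 - τ) * (1 + τ) := fun τ ⟨h₀, h₁⟩ => by
    have : 0 < 1 - τ := by linarith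
    positivity
  have hfactor : ∀ τ ∈ Ioo (0 : ℝ) 1, 0 < (2 * lam - 1) * (τ + τ₀) + 2 * lam :=
    fun τ ⟨h₀, _⟩ => by nlinarith
  have hsub₀ : Ioo 0 τ₀ ⊆ Ioo 0 1 := Ioo_subset_Ioo_right hτ₁.le
  have hsub₁ : Ioo τ₀ 1 ⊆ Ioo 0 1 := Ioo_subset_Ioo_left hτ₀.le
  refine isMinOn_Ioo_of_deriv (hderiv τ₀ ⟨hτ₀, hτ₁⟩).continuousAt
    (fun τ hτ => (hderiv τ (hsub₀ hτ)).differentiableAt.differentiableWithinAt)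
    (fun τ hτ => (hderiv τ (hsub₁ hτ)).differentiableAt.differentiableWithinAt)
    (fun τ hτ => ?_) (fun τ hτ => ?_)
  · rw [(hderiv τ (hsub₀ hτ)).deriv]
    exact div_nonpos_of_nonpos_of_nonneg
      (mul_nonpos_of_nonpos_of_nonneg (by linarith [hτ.2]) (hfactor τ (hsub₀ hτ)).le)
      (hden τ (hsub₀ hτ)).le
  · rw [(hderiv τ (hsub₁ hτ)).deriv]
    exact div_nonneg (mul_nonneg (by linarith [hτ.1]) (hfactor τ (hsub₁ hτ)).le)
      (hden τ (hsub₁ hτ)).le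

theorem logObjective_le_log_three_mul {lam τ₀ : ℝ} (hτ₀ : 0 < τ₀) (hτ₁ : τ₀ < 1)
    (hroot : (2 * lam - 1) * τ₀ ^ 2 + 2 * lam * τ₀ - 1 = 0) :
    logObjective lam τ₀ ≤ log (3 * lam) := by
  have h₂ : 0 < 1 + τ₀ := by linarith
  have hlam : 3 * lam = 3 * (1 + τ₀ ^ 2) / (1 + τ₀) ^ 2 * ((1 + τ₀) / (2 * τ₀)) := by
    rw [div_mul_div_comm, eq_div_iff (by positivity)]
    linear_combination 3 * (1 + τ₀) * hroot
  have hkey : (1 - 2 * lam) * log (1 - τ₀) * (τ₀ * (1 + τ₀))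
      ≤ log (3 * (1 + τ₀ ^ 2) / (1 + τ₀) ^ 2) * (τ₀ * (1 + τ₀)) := by
    have := one_sub_mul_neg_log_one_sub_le hτ₀ hτ₁
    linear_combination this - log (1 - τ₀) * hroot
  have hlog : log (3 * lam)
      = log (3 * (1 + τ₀ ^ 2) / (1 + τ₀) ^ 2) + log (1 + τ₀) - log (2 * τ₀) := by
    rw [hlam, log_mul (by positivity) (by positivity), log_div h₂.ne' (by positivity), add_sub]
  rw [logObjective, hlog]
  linarith [le_of_mul_le_mul_right hkey (by positivity)]

noncomputable def tauStar (lam : ℝ) : ℝ := (lam + √(lam ^ 2 + 2 * lam - 1))⁻¹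

theorem one_lt_add_sqrt {lam : ℝ} (hlam : 1 / 2 < lam) : 1 < lam + √(lam ^ 2 + 2 * lam - 1) := by
  have hs := sq_sqrt (show 0 ≤ lam ^ 2 + 2 * lam - 1 by nlinarith)
  nlinarith [sqrt_nonneg (lam ^ 2 + 2 * lam - 1)]

theorem sqrt_sub_div_eq_tauStar {lam : ℝ} (hlam : 1 / 2 < lam) :
    (√(lam ^ 2 + 2 * lam - 1) - lam) / (2 * lam - 1) = tauStar lam := by
  have hs := sq_sqrt (show 0 ≤ lam ^ 2 + 2 * lam - 1 by nlinarith)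
  have hsum := one_lt_add_sqrt hlam
  rw [tauStar, div_eq_iff (by linarith), inv_mul_eq_div, eq_div_iff (by linarith)]
  linear_combination hs

theorem tauStar_pos {lam : ℝ} (hlam : 1 / 2 < lam) : 0 < tauStar lam :=
  inv_pos.2 (zero_lt_one.trans (one_lt_add_sqrt hlam))

theorem tauStar_lt_one {lam : ℝ} (hlam : 1 / 2 < lam) : tauStar lam < 1 :=
  inv_lt_one_of_one_lt₀ (one_lt_add_sqrt hlam)

theorem tauStar_isRoot {lam : ℝ} (hlam : 1 / 2 < lam) :
    (2 * lam - 1) * tauStar lam ^ 2 + 2 * lam * tauStar lam - 1 = 0 := by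
  have hs := sq_sqrt (show 0 ≤ lam ^ 2 + 2 * lam - 1 by nlinarith)
  have hsum := one_lt_add_sqrt hlam
  rw [tauStar]
  generalize √(lam ^ 2 + 2 * lam - 1) = s at hs hsum
  field_simp
  linear_combination -hs

theorem two_div_tauStar_le {lam : ℝ} (hlam : 0 ≤ lam) : 2 / tauStar lam ≤ 2 * (1 + √2) * lam := by
  have hs : √(lam ^ 2 + 2 * lam - 1) ≤ √2 * lam := by
    rw [show √2 * lam = √(2 * lam ^ 2) by rw [sqrt_mul zero_le_two, sqrt_sq hlam]]
    exact sqrt_le_sqrt (by nlinarith [sq_nonneg (lam - 1)])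
  rw [tauStar, div_inv_eq_mul]
  linarith

theorem stmt19 (lam : ℝ) (hlam : 1 / 2 < lam) :
    let τstar : ℝ := (Real.sqrt (lam ^ 2 + 2 * lam - 1) - lam) / (2 * lam - 1)
    let g : ℝ → ℝ := fun τ => (1 / (1 - τ)) ^ (2 * lam) * (1 - τ ^ 2) / (2 * τ)
    0 < τstar ∧ τstar < 1 ∧ (∀ τ : ℝ, 0 < τ → τ < 1 → g τstar ≤ g τ) ∧
      g τstar ≤ 3 * lam ∧ 2 / τstar ≤ 2 * (1 + Real.sqrt 2) * lam := by
  intro τstar g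
  have hg : ∀ τ ∈ Ioo (0 : ℝ) 1, g τ = exp (logObjective lam τ) :=
    fun τ hτ => objective_eq_exp_logObjective lam hτ.1 hτ.2
  rw [show τstar = tauStar lam from sqrt_sub_div_eq_tauStar hlam]
  have hτ : tauStar lam ∈ Ioo 0 1 := ⟨tauStar_pos hlam, tauStar_lt_one hlam⟩
  refine ⟨hτ.1, hτ.2, fun τ h₀ h₁ => ?_, ?_, two_div_tauStar_le (by linarith)⟩
  · rw [hg _ hτ, hg _ ⟨h₀, h₁⟩]
    exact exp_le_exp.2 (isMinOn_logObjective hlam hτ.1 hτ.2 (tauStar_isRoot hlam) ⟨h₀, h₁⟩)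
  · rw [hg _ hτ, ← exp_log (by linarith : 0 < 3 * lam)]
    exact exp_le_exp.2 (logObjective_le_log_three_mul hτ.1 hτ.2 (tauStar_isRoot hlam))
end
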